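/- arXiv:1311.2369 — 5 statements merged into one kernel-verified Lean document; each statement's English description precedes it below -/
import Mathlib

section
/- (Hyperplane separation lower bound) Let S ∈ ℝ_{≥0}^{f×v} be a nonnegative matrix and W ∈ ℝ^{f×v} be any matrix, and set α := max{⟨W,R⟩ : R ∈ {0,1}^{f×v}, rank(R) ≤ 1}. Then ⟨W,S⟩ ≤ rk₊(S) · α · ‖S‖_∞. In particular, if S is the slack matrix of a polytope P of dimension at least 1, then xc(P) · ‖S‖_∞ · α ≥ ⟨W,S⟩. -/
/-- The extension complexity of a set `P ⊆ ℝ^ι`. -/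
noncomputable def xc {ι : Type*} (P : Set (ι → ℝ)) : ℕ :=
  sInf {r : ℕ | ∃ (d : ℕ) (A : Matrix (Fin r) (Fin d) ℝ) (b : Fin r → ℝ)
    (π : (Fin d → ℝ) →ₗ[ℝ] (ι → ℝ)),
    π '' {y | A.mulVec y ≤ b} = P}

/-- The nonnegative rank of a matrix. -/
noncomputable def nonnegRank {f v : ℕ} (S : Matrix (Fin f) (Fin v) ℝ) : ℕ :=
  sInf {r : ℕ | ∃ (U : Matrix (Fin f) (Fin r) ℝ) (V : Matrix (Fin r) (Fin v) ℝ),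
    (∀ i l, 0 ≤ U i l) ∧ (∀ l j, 0 ≤ V l j) ∧ S = U * V}

/-- The Frobenius inner product `⟨W, S⟩ = Σ_{i,j} W_{ij}·S_{ij}`. -/
def frob {f v : ℕ} (W S : Matrix (Fin f) (Fin v) ℝ) : ℝ :=
  ∑ i, ∑ j, W i j * S i j

/-!
Write `S = ∑ₗ uₗ vₗᵀ` with `uₗ, vₗ ≥ 0` and `r = rk₊(S)` terms. Every entry of `uₗ vₗᵀ` is at
most `‖S‖_∞`, so `uₗ` and `vₗ` lie in boxes `[0, s]^f` and `[0, t]^v` with `s t ≤ ‖S‖_∞`. A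
bilinear form on a box attains its maximum at a vertex: moving each coordinate to `0` or to its
upper bound according to the sign of its coefficient only increases `⟨W, uₗ vₗᵀ⟩`, and ends at
`s t` times a 0/1 rank-one matrix. Hence `⟨W, uₗ vₗᵀ⟩ ≤ ‖S‖_∞ · α` for each `l`.

For the second claim, `rk₊(S) ≤ xc(P)` (Yannakakis). Given an extension `Q = {y | A'y ≤ b'}` with
`π Q = P`, the affine Farkas lemma writes each slack `bᵢ - Aᵢ π y` as `μᵢ + λᵢ ⬝ (b' - A'y)` with
`λᵢ, μᵢ ≥ 0`. A coordinate that is not constant on the polytope `P` attains its maximum and its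
minimum there; adding the Farkas certificates of these two tight inequalities expresses the
constant `1` as `c ⬝ (b' - A'y)` with `c ≥ 0`, so `S = (λ + μ cᵀ) · (b' - A' yⱼ)ⱼ` for preimages
`yⱼ` of the vertices. Farkas' lemma itself comes from separating a point from a finitely generated
cone, which is closed by the conic Carathéodory theorem.
-/

open Matrix Function Set

section ConicHull

variable {ι E : Type*} [Fintype ι] [AddCommGroup E] [Module ℝ E]

theorem PointedCone.mem_hull_range_iff {w : ι → E} {x : E} :
    x ∈ PointedCone.hull ℝ (range w) ↔ ∃ c : ι → ℝ, 0 ≤ c ∧ ∑ i, c i • w i = x := by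
  rw [PointedCone.hull, Submodule.mem_span_range_iff_exists_fun]
  constructor
  · rintro ⟨c, rfl⟩
    exact ⟨fun i => c i, fun i => (c i).2, rfl⟩
  · rintro ⟨c, hc, rfl⟩
    exact ⟨fun i => ⟨c i, hc i⟩, rfl⟩

theorem exists_nonneg_repr_support_ssubset {w : ι → E} {c : ι → ℝ} (hc : 0 ≤ c)
    (hdep : ¬LinearIndepOn ℝ w (support c)) :
    ∃ c' : ι → ℝ, 0 ≤ c' ∧ support c' ⊂ support c ∧ ∑ i, c' i • w i = ∑ i, c i • w i := by
  classical
  obtain ⟨l, hl_supp, hl_sum, hl_ne⟩ : ∃ l : ι →₀ ℝ, ↑l.support ⊆ support c ∧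
      ∑ i, l i • w i = 0 ∧ l ≠ 0 := by
    simp only [linearIndepOn_iff, not_forall, exists_prop] at hdep
    obtain ⟨l, hl, hl0, hne⟩ := hdep
    refine ⟨l, hl, ?_, hne⟩
    rwa [Finsupp.linearCombination_apply, Finsupp.sum_fintype _ _ (by simp)] at hl0
  obtain ⟨g, hg_supp, hg_sum, i₁, hi₁⟩ : ∃ g : ι → ℝ, support g ⊆ support c ∧
      ∑ i, g i • w i = 0 ∧ ∃ i, 0 < g i := by
    obtain ⟨i, hi⟩ := Finsupp.ne_iff.mp hl_ne
    rcases (ne_of_apply_ne id hi).lt_or_gt with hneg | hpos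
    · refine ⟨-l, by simpa using hl_supp, by simp [neg_smul, hl_sum], i, by simpa using hneg⟩
    · exact ⟨l, by simpa using hl_supp, hl_sum, i, hpos⟩
  -- Move from `c` along `-g` until the first coefficient hits zero.
  obtain ⟨i₀, hi₀, hmin⟩ := Finset.exists_min_image {i | 0 < g i} (fun i => c i / g i)
    ⟨i₁, by simpa using hi₁⟩
  rw [Finset.mem_filter_univ] at hi₀
  set τ := c i₀ / g i₀
  refine ⟨c - τ • g, fun i => ?_, ?_, ?_⟩
  · rcases lt_or_ge 0 (g i) with hgi | hgi
    · simpa [sub_nonneg] using (le_div_iff₀ hgi).mp (hmin i (by simpa using hgi))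
    · have : 0 ≤ τ := div_nonneg (hc i₀) hi₀.le
      simpa using add_nonneg (hc i) (mul_nonneg this (neg_nonneg.mpr hgi))
  · refine ssubset_of_subset_of_ne (fun i hi => ?_) fun h => ?_
    · by_contra hci
      have : g i = 0 := by_contra fun hgi => hci (hg_supp hgi)
      simp_all
    · have hc₀ : c i₀ ≠ 0 := hg_supp hi₀.ne'
      have : (c - τ • g) i₀ = 0 := by simp [τ, div_mul_cancel₀ _ hi₀.ne']
      exact (h ▸ hc₀ : i₀ ∈ support (c - τ • g)) this
  · simp [sub_smul, Finset.sum_sub_distrib, mul_smul, ← Finset.smul_sum, hg_sum]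

theorem exists_linearIndepOn_nonneg_repr (w : ι → E) {c : ι → ℝ} (hc : 0 ≤ c) :
    ∃ c' : ι → ℝ, 0 ≤ c' ∧ LinearIndepOn ℝ w (support c') ∧
      ∑ i, c' i • w i = ∑ i, c i • w i := by
  induction hn : (support c).ncard using Nat.strong_induction_on generalizing c with
  | _ n ih =>
    by_cases hli : LinearIndepOn ℝ w (support c)
    · exact ⟨c, hc, hli, rfl⟩
    obtain ⟨c', hc', hlt, hsum⟩ := exists_nonneg_repr_support_ssubset hc hli
    obtain ⟨c'', hc'', hli'', hsum''⟩ := ih _ (hn ▸ Set.ncard_lt_ncard hlt) hc' rfl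
    exact ⟨c'', hc'', hli'', hsum''.trans hsum⟩

theorem PointedCone.isClosed_hull_range [TopologicalSpace E] [IsTopologicalAddGroup E]
    [ContinuousSMul ℝ E] [T2Space E] (w : ι → E) :
    IsClosed (PointedCone.hull ℝ (range w) : Set E) := by
  classical
  have hcover : (PointedCone.hull ℝ (range w) : Set E) =
      ⋃ (t : Finset ι) (_ : LinearIndepOn ℝ w t),
        Fintype.linearCombination ℝ (fun i : t => w i) '' Ici 0 := by
    ext x
    simp only [SetLike.mem_coe, PointedCone.mem_hull_range_iff, mem_iUnion, mem_image,
      Fintype.linearCombination_apply, exists_prop]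
    constructor
    · rintro ⟨c, hc, rfl⟩
      obtain ⟨c', hc', hli, hsum⟩ := exists_linearIndepOn_nonneg_repr w hc
      refine ⟨(support c').toFinset, by simpa using hli, fun i => c' i, fun i => hc' i, ?_⟩
      rw [← hsum, Finset.sum_coe_sort _ (fun i => c' i • w i)]
      exact Finset.sum_subset (Finset.subset_univ _) (by simp +contextual)
    · rintro ⟨t, -, c, hc, rfl⟩
      refine ⟨fun i => if h : i ∈ t then c ⟨i, h⟩ else 0, fun i => ?_, ?_⟩
      · by_cases h : i ∈ t
        · simpa [h] using hc ⟨i, h⟩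
        · simp [h]
      · rw [← Finset.sum_subset (Finset.subset_univ t) (by simp +contextual),
          ← Finset.sum_coe_sort t]
        simp
  rw [hcover]
  refine isClosed_iUnion_of_finite fun t => isClosed_iUnion_of_finite fun hli => ?_
  have hinj : LinearMap.ker (Fintype.linearCombination ℝ (fun i : t => w i)) = ⊥ :=
    LinearMap.ker_eq_bot.mpr (linearIndependent_iff_injective_fintypeLinearCombination.mp hli)
  exact (LinearMap.isClosedEmbedding_of_injective hinj).isClosedMap _ isClosed_Ici

end ConicHull

section Farkas

variable {ι m n : Type*} [Fintype n]

theorem LinearMap.apply_eq_dotProduct [DecidableEq n] (φ : (n → ℝ) →ₗ[ℝ] ℝ) (y : n → ℝ) :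
    φ y = (fun k => φ (Pi.single k 1)) ⬝ᵥ y := by
  conv_lhs => rw [pi_eq_sum_univ' y]
  simp [dotProduct, mul_comm]

theorem exists_nonneg_sum_eq_of_forall_dotProduct_nonneg [Fintype ι] (w : ι → n → ℝ)
    (z : n → ℝ) (h : ∀ y, (∀ i, 0 ≤ w i ⬝ᵥ y) → 0 ≤ z ⬝ᵥ y) :
    ∃ c : ι → ℝ, 0 ≤ c ∧ ∑ i, c i • w i = z := by
  classical
  rw [← PointedCone.mem_hull_range_iff]
  by_contra hz
  let C : ProperCone ℝ (n → ℝ) := ⟨_, PointedCone.isClosed_hull_range w⟩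
  obtain ⟨φ, hφC, hφz⟩ := C.hyperplane_separation_point hz
  have hφ (x : n → ℝ) : φ x = x ⬝ᵥ fun k => φ (Pi.single k 1) := by
    rw [dotProduct_comm]
    exact (φ : (n → ℝ) →ₗ[ℝ] ℝ).apply_eq_dotProduct x
  refine hφz.not_ge ((hφ z).trans_ge (h _ fun i => ?_))
  exact (hφ _).symm.trans_ge (hφC _ (PointedCone.subset_hull (mem_range_self i)))

theorem apply_nonpos_of_mulVec_nonpos {A : Matrix m n ℝ} {b : m → ℝ} {y₀ : n → ℝ}
    (hy₀ : A *ᵥ y₀ ≤ b) {φ : (n → ℝ) →ₗ[ℝ] ℝ} {γ : ℝ} (hφ : ∀ y, A *ᵥ y ≤ b → φ y ≤ γ)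
    {v : n → ℝ} (hv : A *ᵥ v ≤ 0) : φ v ≤ 0 := by
  by_contra! hpos
  have hγ : φ y₀ ≤ γ := hφ y₀ hy₀
  set s := (γ - φ y₀ + 1) / φ v
  have hs : 0 ≤ s := div_nonneg (by linarith) hpos.le
  have hmem : A *ᵥ (y₀ + s • v) ≤ b := by
    rw [mulVec_add, mulVec_smul]
    intro l
    simpa using add_le_of_le_of_nonpos (hy₀ l) (mul_nonpos_of_nonneg_of_nonpos hs (hv l))
  have := hφ _ hmem
  rw [map_add, map_smul, smul_eq_mul, div_mul_cancel₀ _ hpos.ne'] at this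
  linarith

theorem exists_eq_add_dotProduct_slack [Fintype m] {A : Matrix m n ℝ} {b : m → ℝ}
    {y₀ : n → ℝ} (hy₀ : A *ᵥ y₀ ≤ b) {φ : (n → ℝ) →ₗ[ℝ] ℝ} {γ : ℝ}
    (hφ : ∀ y, A *ᵥ y ≤ b → φ y ≤ γ) :
    ∃ (c : m → ℝ) (μ : ℝ), 0 ≤ c ∧ 0 ≤ μ ∧ ∀ y, γ - φ y = μ + c ⬝ᵥ (b - A *ᵥ y) := by
  classical
  have hg := φ.apply_eq_dotProduct
  set g := fun k => φ (Pi.single k 1)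
  have hcone (t : ℝ) (y : n → ℝ) (ht : 0 ≤ t) (hy : ∀ l, A l ⬝ᵥ y ≤ b l * t) :
      g ⬝ᵥ y ≤ γ * t := by
    rw [← hg]
    rcases ht.eq_or_lt with rfl | ht
    · simpa using apply_nonpos_of_mulVec_nonpos hy₀ hφ fun l => (hy l).trans_eq (mul_zero _)
    · have := hφ (t⁻¹ • y) fun l => by
        rw [mulVec_smul, Pi.smul_apply, smul_eq_mul, inv_mul_le_iff₀ ht, mul_comm]
        exact hy l
      rwa [map_smul, smul_eq_mul, inv_mul_le_iff₀ ht, mul_comm] at this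
  -- Homogenize: on `ℝ × ℝⁿ`, the forms `(t, y) ↦ t` and `(t, y) ↦ t * b l - A l ⬝ᵥ y`
  -- generate `(t, y) ↦ t * γ - φ y`.
  let w : Unit ⊕ m → Unit ⊕ n → ℝ :=
    Sum.elim (fun _ => Sum.elim 1 0) (fun l => Sum.elim (fun _ => b l) (-A l))
  obtain ⟨c, hc, hcz⟩ := exists_nonneg_sum_eq_of_forall_dotProduct_nonneg w
    (Sum.elim (fun _ => γ) (-g)) fun u hu => by
      obtain ⟨t, y, rfl⟩ : ∃ t y, u = Sum.elim (fun _ : Unit => t) y :=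
        ⟨u (Sum.inl ()), u ∘ Sum.inr, by ext (_ | _) <;> rfl⟩
      simp [w, sumElim_dotProduct_sumElim] at hu ⊢
      exact hcone t y hu.1 hu.2
  refine ⟨c ∘ Sum.inr, c (Sum.inl ()), fun l => hc _, hc _, fun y => ?_⟩
  have := congrArg (· ⬝ᵥ Sum.elim (fun _ => 1) y) hcz
  simp [sum_dotProduct, Fintype.sum_sum_type, w, sumElim_dotProduct_sumElim] at this
  rw [hg, sub_eq_add_neg, ← this]
  rfl

end Farkas

section Rectangles

theorem exists_zero_one_dotProduct_ge {κ : Type*} [Fintype κ] (k : κ → ℝ) {c : κ → ℝ} {t : ℝ}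
    (hc₀ : 0 ≤ c) (hct : ∀ i, c i ≤ t) :
    ∃ e : κ → ℝ, (∀ i, e i = 0 ∨ e i = 1) ∧ k ⬝ᵥ c ≤ t * (k ⬝ᵥ e) := by
  classical
  refine ⟨fun i => if 0 < k i then 1 else 0, fun i => by by_cases h : 0 < k i <;> simp [h], ?_⟩
  rw [← smul_eq_mul, ← dotProduct_smul]
  refine Finset.sum_le_sum fun i _ => ?_
  by_cases hk : 0 < k i
  · simpa [hk] using mul_le_mul_of_nonneg_left (hct i) hk.le
  · simpa [hk] using mul_nonpos_of_nonpos_of_nonneg (not_lt.mp hk) (hc₀ i)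

def IsRectangle {m n : Type*} [Fintype n] (R : Matrix m n ℝ) : Prop :=
  (∀ i j, R i j = 0 ∨ R i j = 1) ∧ R.rank ≤ 1

theorem isRectangle_vecMulVec {m n : Type*} [Fintype n] {a : m → ℝ} {b : n → ℝ}
    (ha : ∀ i, a i = 0 ∨ a i = 1) (hb : ∀ j, b j = 0 ∨ b j = 1) :
    IsRectangle (vecMulVec a b) :=
  ⟨fun i j => by rcases ha i with h | h <;> simp [vecMulVec_apply, h, hb j],
    rank_vecMulVec_le a b⟩

variable {f v : ℕ} {W : Matrix (Fin f) (Fin v) ℝ} {α : ℝ}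

theorem frob_vecMulVec (W : Matrix (Fin f) (Fin v) ℝ) (a : Fin f → ℝ) (b : Fin v → ℝ) :
    frob W (vecMulVec a b) = a ⬝ᵥ (W *ᵥ b) := by
  simp [frob, dotProduct, mulVec, vecMulVec_apply, Finset.mul_sum, mul_left_comm]

theorem frob_mul (W : Matrix (Fin f) (Fin v) ℝ) {r : ℕ} (U : Matrix (Fin f) (Fin r) ℝ)
    (V : Matrix (Fin r) (Fin v) ℝ) :
    frob W (U * V) = ∑ l : Fin r, frob W (vecMulVec (fun i => U i l) (V l)) := by
  simp only [frob, mul_apply, vecMulVec_apply, Finset.mul_sum]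
  rw [Finset.sum_comm (γ := Fin r)]
  refine Finset.sum_congr rfl fun i _ => ?_
  rw [Finset.sum_comm]

theorem frob_vecMulVec_le (hα : ∀ R, IsRectangle R → frob W R ≤ α) {a : Fin f → ℝ}
    {b : Fin v → ℝ} {s t : ℝ} (ha₀ : 0 ≤ a) (has : ∀ i, a i ≤ s) (hb₀ : 0 ≤ b)
    (hbt : ∀ j, b j ≤ t) (hs : 0 ≤ s) (ht : 0 ≤ t) :
    frob W (vecMulVec a b) ≤ s * t * α := by
  obtain ⟨eb, heb, hb⟩ := exists_zero_one_dotProduct_ge (a ᵥ* W) hb₀ hbt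
  obtain ⟨ea, hea, ha⟩ := exists_zero_one_dotProduct_ge (W *ᵥ eb) ha₀ has
  have hR := hα _ (isRectangle_vecMulVec hea heb)
  rw [frob_vecMulVec] at hR ⊢
  calc a ⬝ᵥ (W *ᵥ b) = (a ᵥ* W) ⬝ᵥ b := dotProduct_mulVec a W b
    _ ≤ t * ((W *ᵥ eb) ⬝ᵥ a) := hb.trans_eq (by rw [← dotProduct_mulVec, dotProduct_comm])
    _ ≤ t * (s * (ea ⬝ᵥ (W *ᵥ eb))) := by
        gcongr
        rwa [dotProduct_comm ea]
    _ ≤ s * t * α := by nlinarith [mul_nonneg hs ht]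

theorem frob_vecMulVec_le_of_mul_le (hα : ∀ R, IsRectangle R → frob W R ≤ α) (hα₀ : 0 ≤ α)
    {β : ℝ} (hβ : 0 ≤ β) {a : Fin f → ℝ} {b : Fin v → ℝ} (ha₀ : 0 ≤ a) (hb₀ : 0 ≤ b)
    (hab : ∀ i j, a i * b j ≤ β) :
    frob W (vecMulVec a b) ≤ β * α := by
  rcases isEmpty_or_nonempty (Fin f) with hf | hf
  · simpa [frob] using mul_nonneg hβ hα₀
  rcases isEmpty_or_nonempty (Fin v) with hv | hv
  · simpa [frob] using mul_nonneg hβ hα₀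
  obtain ⟨i₀, hi₀⟩ := Finite.exists_max a
  obtain ⟨j₀, hj₀⟩ := Finite.exists_max b
  calc frob W (vecMulVec a b) ≤ a i₀ * b j₀ * α :=
        frob_vecMulVec_le hα ha₀ hi₀ hb₀ hj₀ (ha₀ i₀) (hb₀ j₀)
    _ ≤ β * α := mul_le_mul_of_nonneg_right (hab i₀ j₀) hα₀

theorem frob_le_of_nonneg_factorization (hα : ∀ R, IsRectangle R → frob W R ≤ α)
    (hα₀ : 0 ≤ α) {S : Matrix (Fin f) (Fin v) ℝ} {β : ℝ} (hβ : 0 ≤ β) (hSβ : ∀ i j, S i j ≤ β)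
    {r : ℕ} {U : Matrix (Fin f) (Fin r) ℝ} {V : Matrix (Fin r) (Fin v) ℝ}
    (hU : ∀ i l, 0 ≤ U i l) (hV : ∀ l j, 0 ≤ V l j) (hSUV : S = U * V) :
    frob W S ≤ r * β * α := by
  have hentry (i l j) : U i l * V l j ≤ β := by
    refine le_trans ?_ (hSβ i j)
    rw [hSUV, mul_apply]
    exact Finset.single_le_sum (fun l _ => mul_nonneg (hU i l) (hV l j)) (Finset.mem_univ l)
  calc frob W S = ∑ l, frob W (vecMulVec (fun i => U i l) (V l)) := hSUV ▸ frob_mul W U V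
    _ ≤ ∑ _l : Fin r, β * α := Finset.sum_le_sum fun l _ =>
        frob_vecMulVec_le_of_mul_le hα hα₀ hβ (fun i => hU i l) (hV l) (fun i j => hentry i l j)
    _ = r * β * α := by simp [mul_assoc]

theorem exists_nonneg_factorization_nonnegRank {f v : ℕ} {S : Matrix (Fin f) (Fin v) ℝ}
    (hS : ∀ i j, 0 ≤ S i j) :
    ∃ (U : Matrix (Fin f) (Fin (nonnegRank S)) ℝ) (V : Matrix (Fin (nonnegRank S)) (Fin v) ℝ),
      (∀ i l, 0 ≤ U i l) ∧ (∀ l j, 0 ≤ V l j) ∧ S = U * V :=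
  Nat.sInf_mem (s := {r | ∃ (U : Matrix (Fin f) (Fin r) ℝ) (V : Matrix (Fin r) (Fin v) ℝ),
      (∀ i l, 0 ≤ U i l) ∧ (∀ l j, 0 ≤ V l j) ∧ S = U * V})
    ⟨f, 1, S, fun i l => by by_cases h : i = l <;> simp [one_apply, h], hS,
      (Matrix.one_mul S).symm⟩

end Rectangles

section Extension

theorem exists_nonneg_dotProduct_slack_eq_one {m n : Type*} [Fintype m] [Fintype n]
    {A : Matrix m n ℝ} {b : m → ℝ} {φ : (n → ℝ) →ₗ[ℝ] ℝ} {y₁ y₂ : n → ℝ}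
    (hy₁ : A *ᵥ y₁ ≤ b) (hy₂ : A *ᵥ y₂ ≤ b) (hmax : ∀ y, A *ᵥ y ≤ b → φ y ≤ φ y₁)
    (hmin : ∀ y, A *ᵥ y ≤ b → φ y₂ ≤ φ y) (hlt : φ y₂ < φ y₁) :
    ∃ c : m → ℝ, 0 ≤ c ∧ ∀ y, c ⬝ᵥ (b - A *ᵥ y) = 1 := by
  obtain ⟨c₁, μ₁, hc₁, hμ₁, h₁⟩ := exists_eq_add_dotProduct_slack hy₁ hmax
  obtain ⟨c₂, μ₂, hc₂, hμ₂, h₂⟩ := exists_eq_add_dotProduct_slack (φ := -φ) hy₂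
    fun y hy => neg_le_neg (hmin y hy)
  simp only [LinearMap.neg_apply, sub_neg_eq_add] at h₂
  -- Both inequalities are tight somewhere on the polyhedron, which forces `μ₁ = μ₂ = 0`.
  have hμ₁0 : μ₁ = 0 := by
    linarith [h₁ y₁, dotProduct_nonneg_of_nonneg hc₁ (sub_nonneg.mpr hy₁)]
  have hμ₂0 : μ₂ = 0 := by
    linarith [h₂ y₂, dotProduct_nonneg_of_nonneg hc₂ (sub_nonneg.mpr hy₂)]
  refine ⟨(φ y₁ - φ y₂)⁻¹ • (c₁ + c₂),
    smul_nonneg (inv_nonneg.mpr (sub_pos.mpr hlt).le) (add_nonneg hc₁ hc₂), fun y => ?_⟩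
  have hsum : (c₁ + c₂) ⬝ᵥ (b - A *ᵥ y) = φ y₁ - φ y₂ := by
    rw [add_dotProduct]
    linarith [h₁ y, h₂ y]
  rw [smul_dotProduct, hsum, smul_eq_mul, inv_mul_cancel₀ (sub_pos.mpr hlt).ne']

theorem exists_forall_le_of_mem_convexHull_range {E κ : Type*} [AddCommGroup E] [Module ℝ E]
    [Finite κ] [Nonempty κ] (x : κ → E) (φ : E →ₗ[ℝ] ℝ) :
    ∃ j, ∀ z ∈ convexHull ℝ (range x), φ z ≤ φ (x j) := by
  obtain ⟨j, hj⟩ := Finite.exists_max (φ ∘ x)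
  exact ⟨j, fun z hz =>
    convexHull_min (range_subset_iff.mpr hj) (convex_halfSpace_le φ.isLinear _) hz⟩

variable {ι δ : Type*} [Fintype δ] {r : ℕ} {A' : Matrix (Fin r) δ ℝ}
  {b' : Fin r → ℝ} {π : (δ → ℝ) →ₗ[ℝ] ι → ℝ}

theorem exists_nonneg_dotProduct_slack_eq_one_of_image_eq_convexHull {κ : Type*} [Finite κ]
    {x : κ → ι → ℝ} (hπ : π '' {y | A' *ᵥ y ≤ b'} = convexHull ℝ (range x))
    (hnt : (convexHull ℝ (range x)).Nontrivial) :
    ∃ c : Fin r → ℝ, 0 ≤ c ∧ ∀ y, c ⬝ᵥ (b' - A' *ᵥ y) = 1 := by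
  obtain ⟨p, hp, q, hq, hpq⟩ := hnt
  obtain ⟨k, hk⟩ := Function.ne_iff.mp hpq
  have : Nonempty κ := range_nonempty_iff_nonempty.mp (convexHull_nonempty_iff.mp ⟨p, hp⟩)
  obtain ⟨j₁, hj₁⟩ := exists_forall_le_of_mem_convexHull_range x (LinearMap.proj k)
  obtain ⟨j₂, hj₂⟩ := exists_forall_le_of_mem_convexHull_range x (-LinearMap.proj k)
  simp only [LinearMap.neg_apply, LinearMap.coe_proj, Function.eval, neg_le_neg_iff] at hj₁ hj₂
  have hQ (y) (hy : A' *ᵥ y ≤ b') : π y ∈ convexHull ℝ (range x) := hπ ▸ mem_image_of_mem π hy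
  obtain ⟨y₁, hy₁, hπy₁⟩ := hπ.symm ▸ subset_convexHull ℝ _ (mem_range_self j₁)
  obtain ⟨y₂, hy₂, hπy₂⟩ := hπ.symm ▸ subset_convexHull ℝ _ (mem_range_self j₂)
  refine exists_nonneg_dotProduct_slack_eq_one (φ := LinearMap.proj k ∘ₗ π) hy₁ hy₂
    (fun y hy => by simpa [hπy₁] using hj₁ _ (hQ y hy))
    (fun y hy => by simpa [hπy₂] using hj₂ _ (hQ y hy)) ?_
  simp only [LinearMap.coe_comp, LinearMap.coe_proj, Function.comp_apply, Function.eval, hπy₁,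
    hπy₂]
  refine lt_of_le_of_ne ((hj₂ p hp).trans (hj₁ p hp)) fun h => hk ?_
  exact le_antisymm ((hj₁ p hp).trans (h ▸ hj₂ q hq)) ((hj₁ q hq).trans (h ▸ hj₂ p hp))

theorem nonnegRank_le_of_extension [Fintype ι] {f v : ℕ} {S : Matrix (Fin f) (Fin v) ℝ}
    {A : Matrix (Fin f) ι ℝ} {b : Fin f → ℝ} {P : Set (ι → ℝ)} {x : Fin v → ι → ℝ}
    (hPA : ∀ z ∈ P, A *ᵥ z ≤ b) (hconv : P = convexHull ℝ (range x)) (hnt : P.Nontrivial)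
    (hS : ∀ i j, S i j = b i - (A *ᵥ x j) i) (hπ : π '' {y | A' *ᵥ y ≤ b'} = P) :
    nonnegRank S ≤ r := by
  have hQ (y) (hy : A' *ᵥ y ≤ b') : π y ∈ P := hπ ▸ mem_image_of_mem π hy
  choose y hyQ hyx using fun j => hπ.symm ▸ hconv ▸ subset_convexHull ℝ _ (mem_range_self j)
  obtain ⟨c, hc, hc₁⟩ := exists_nonneg_dotProduct_slack_eq_one_of_image_eq_convexHull
    (hπ.trans hconv) (hconv ▸ hnt)
  obtain ⟨p, hp, -⟩ := hnt
  obtain ⟨y₀, hy₀, -⟩ := hπ.symm ▸ hp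
  choose lam μ hlam hμ hrow using fun i => exists_eq_add_dotProduct_slack hy₀
    (φ := LinearMap.proj i ∘ₗ A.mulVecLin ∘ₗ π) (γ := b i) fun y hy => hPA _ (hQ y hy) i
  refine Nat.sInf_le ⟨Matrix.of fun i => lam i + μ i • c, Matrix.of fun l j => (b' - A' *ᵥ y j) l,
    fun i l => add_nonneg (hlam i l) (mul_nonneg (hμ i) (hc l)),
    fun l j => sub_nonneg.mpr (hyQ j l), ?_⟩
  ext i j
  have hrow_ij := hrow i (y j)
  simp only [LinearMap.coe_comp, LinearMap.coe_proj, Function.comp_apply, Function.eval,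
    mulVecLin_apply] at hrow_ij
  rw [mul_apply', hS, ← hyx j, hrow_ij]
  change _ = (lam i + μ i • c) ⬝ᵥ (b' - A' *ᵥ y j)
  rw [add_dotProduct, smul_dotProduct, hc₁, smul_eq_mul, mul_one, add_comm]

theorem nonnegRank_le_xc {f v n : ℕ} {S : Matrix (Fin f) (Fin v) ℝ}
    {A : Matrix (Fin f) (Fin n) ℝ} {b : Fin f → ℝ} {P : Set (Fin n → ℝ)} {x : Fin v → Fin n → ℝ}
    (hP : P = {z | A *ᵥ z ≤ b}) (hconv : P = convexHull ℝ (range x)) (hnt : P.Nontrivial)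
    (hS : ∀ i j, S i j = b i - (A *ᵥ x j) i) :
    nonnegRank S ≤ xc P := by
  obtain ⟨d, A', b', π, hπ⟩ : xc P ∈ {r : ℕ | ∃ (d : ℕ) (A' : Matrix (Fin r) (Fin d) ℝ)
      (b' : Fin r → ℝ) (π : (Fin d → ℝ) →ₗ[ℝ] (Fin n → ℝ)), π '' {y | A' *ᵥ y ≤ b'} = P} :=
    Nat.sInf_mem ⟨f, n, A, b, LinearMap.id, by simp [hP]⟩
  exact nonnegRank_le_of_extension (fun _ hz => hP.subset hz) hconv hnt hS hπ

end Extension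

/-- **Hyperplane separation lower bound**: for a nonnegative matrix `S`, any matrix `W`, with
`α` the maximum of `⟨W, R⟩` over 0/1 matrices `R` of rank at most one and `β = ‖S‖_∞` the largest
absolute value of an entry of `S`, one has `⟨W, S⟩ ≤ rk₊(S)·α·β`.  In particular, if `S` is the
slack matrix of a polytope `P` of dimension at least one, then `⟨W, S⟩ ≤ xc(P)·β·α`. -/
theorem hyperplane_separation_lower_bound (f v : ℕ)
    (S W : Matrix (Fin f) (Fin v) ℝ) (hS : ∀ i j, 0 ≤ S i j)
    (α : ℝ)
    (hα : IsGreatest {a | ∃ R : Matrix (Fin f) (Fin v) ℝ,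
      (∀ i j, R i j = 0 ∨ R i j = 1) ∧ R.rank ≤ 1 ∧ a = frob W R} α)
    (β : ℝ)
    (hβ : IsGreatest {a | ∃ i j, a = |S i j|} β) :
    frob W S ≤ (nonnegRank S : ℝ) * α * β ∧
    ∀ (n : ℕ) (A : Matrix (Fin f) (Fin n) ℝ) (b : Fin f → ℝ)
      (P : Set (Fin n → ℝ)) (x : Fin v → (Fin n → ℝ)),
      P = {z | A.mulVec z ≤ b} →
      Set.range x = Set.extremePoints ℝ P →
      P = convexHull ℝ (Set.range x) →
      (∃ p ∈ P, ∃ q ∈ P, p ≠ q) →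
      (∀ i j, S i j = b i - A.mulVec (x j) i) →
      frob W S ≤ (xc P : ℝ) * β * α := by
  have hrect (R) (hR : IsRectangle R) : frob W R ≤ α := hα.2 ⟨R, hR.1, hR.2, rfl⟩
  have hα₀ : 0 ≤ α := by simpa [frob] using hrect 0 ⟨fun _ _ => Or.inl rfl, by simp⟩
  obtain ⟨_, _, hβ_eq⟩ := hβ.1
  have hβ₀ : 0 ≤ β := hβ_eq ▸ abs_nonneg _
  have hSβ (i j) : S i j ≤ β := (le_abs_self _).trans (hβ.2 ⟨i, j, rfl⟩)
  obtain ⟨U, V, hU, hV, hSUV⟩ := exists_nonneg_factorization_nonnegRank hS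
  have hrk := frob_le_of_nonneg_factorization hrect hα₀ hβ₀ hSβ hU hV hSUV
  refine ⟨hrk.trans_eq (mul_right_comm _ _ _), fun n A b P x hP _ hconv hnt hslack => ?_⟩
  have hxc : (nonnegRank S : ℝ) ≤ xc P := mod_cast nonnegRank_le_xc hP hconv hnt hslack
  exact hrk.trans (by gcongr)
end

section
/- Let K_n = (V,E) be the complete graph on an even number n of nodes and let S be the matrix indexed by odd-size subsets U ⊆ V and perfect matchings M ⊆ E with entries S_{U,M} = |M ∩ δ(U)| − 1. For non-adjacent edges e_1, e_2 ∈ E let 𝓤_{e_1,e_2} := {U : |U| odd, e_1,e_2 ∈ δ(U)} and 𝓜_{e_1,e_2} := {M perfect matching : e_1,e_2 ∈ M}. Then supp(S) = {(U,M) : S_{U,M} > 0} equals the union of the rectangles 𝓤_{e_1,e_2} × 𝓜_{e_1,e_2} over all pairs of non-adjacent edges; moreover, every entry (U,M) with S_{U,M} = k lies in exactly C(k+1, 2) of these rectangles. -/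
/-- The cut `δ(U)`: all edges of the complete graph with exactly one endpoint in `U`. -/
def cutSet {n : ℕ} (U : Set (Fin n)) : Set (Sym2 (Fin n)) :=
  {e | ∃ a b : Fin n, e = s(a, b) ∧ a ∈ U ∧ b ∉ U}

/-- `M` is a matching: a set of non-loop edges that are pairwise vertex disjoint. -/
def IsMatching {n : ℕ} (M : Finset (Sym2 (Fin n))) : Prop :=
  (∀ e ∈ M, ¬ e.IsDiag) ∧
  (∀ e ∈ M, ∀ f ∈ M, e ≠ f → ∀ v : Fin n, v ∈ e → v ∉ f)

/-- `M` is a perfect matching of the complete graph on `n` nodes. -/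
def IsPM {n : ℕ} (M : Finset (Sym2 (Fin n))) : Prop :=
  IsMatching M ∧ ∀ v : Fin n, ∃ e ∈ M, v ∈ e

/-- Two edges are non-adjacent if they share no endpoint. -/
def NonAdj {n : ℕ} (e₁ e₂ : Sym2 (Fin n)) : Prop :=
  ∀ v : Fin n, v ∈ e₁ → v ∉ e₂

/-! Distinct edges of a matching are non-adjacent, so the rectangles covering `(U, M)` are
indexed exactly by the 2-element subsets of `M ∩ δ(U)`. -/

theorem ncard_coe_inter_eq_card_filter {α : Type*} (s : Finset α) (C : Set α)
    [DecidablePred (· ∈ C)] : ((s : Set α) ∩ C).ncard = (s.filter (· ∈ C)).card := by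
  rw [← Set.ncard_coe_finset, Finset.coe_filter]
  rfl

variable {n : ℕ}

theorem NonAdj.ne {e₁ e₂ : Sym2 (Fin n)} (h : NonAdj e₁ e₂) : e₁ ≠ e₂ := by
  rintro rfl
  induction e₁ using Sym2.ind with
  | _ a b => exact h a (Sym2.mem_mk_left a b) (Sym2.mem_mk_left a b)

namespace IsMatching

variable {M : Finset (Sym2 (Fin n))} (hM : IsMatching M) (C : Set (Sym2 (Fin n)))
include hM

theorem nonAdj_iff_ne {e f : Sym2 (Fin n)} (he : e ∈ M) (hf : f ∈ M) :
    NonAdj e f ↔ e ≠ f :=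
  ⟨NonAdj.ne, hM.2 e he f hf⟩

theorem exists_nonAdj_pair_iff [DecidablePred (· ∈ C)] :
    (∃ e₁ e₂ : Sym2 (Fin n), ¬ e₁.IsDiag ∧ ¬ e₂.IsDiag ∧ NonAdj e₁ e₂ ∧
        e₁ ∈ M ∧ e₂ ∈ M ∧ e₁ ∈ C ∧ e₂ ∈ C) ↔
      1 < (M.filter (· ∈ C)).card := by
  simp only [Finset.one_lt_card, Finset.mem_filter]
  constructor
  · rintro ⟨e₁, e₂, -, -, hna, hm₁, hm₂, hc₁, hc₂⟩
    exact ⟨e₁, ⟨hm₁, hc₁⟩, e₂, ⟨hm₂, hc₂⟩, hna.ne⟩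
  · rintro ⟨e₁, ⟨hm₁, hc₁⟩, e₂, ⟨hm₂, hc₂⟩, hne⟩
    exact ⟨e₁, e₂, hM.1 e₁ hm₁, hM.1 e₂ hm₂, (hM.nonAdj_iff_ne hm₁ hm₂).2 hne,
      hm₁, hm₂, hc₁, hc₂⟩

theorem nonAdj_pairs_eq_powersetCard [DecidablePred (· ∈ C)] :
    {p : Finset (Sym2 (Fin n)) | ∃ e₁ e₂ : Sym2 (Fin n),
        ¬ e₁.IsDiag ∧ ¬ e₂.IsDiag ∧ NonAdj e₁ e₂ ∧ p = {e₁, e₂} ∧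
        e₁ ∈ M ∧ e₂ ∈ M ∧ e₁ ∈ C ∧ e₂ ∈ C} =
      ↑((M.filter (· ∈ C)).powersetCard 2) := by
  ext p
  simp only [Set.mem_ofPred_eq, Finset.mem_coe, Finset.mem_powersetCard, Finset.card_eq_two]
  constructor
  · rintro ⟨e₁, e₂, -, -, hna, rfl, hm₁, hm₂, hc₁, hc₂⟩
    refine ⟨?_, e₁, e₂, hna.ne, rfl⟩
    simp [Finset.insert_subset_iff, hm₁, hm₂, hc₁, hc₂]
  · rintro ⟨hsub, e₁, e₂, hne, rfl⟩
    obtain ⟨⟨hm₁, hc₁⟩, ⟨hm₂, hc₂⟩⟩ : (e₁ ∈ M ∧ e₁ ∈ C) ∧ (e₂ ∈ M ∧ e₂ ∈ C) := by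
      simpa [Finset.insert_subset_iff] using hsub
    exact ⟨e₁, e₂, hM.1 e₁ hm₁, hM.1 e₂ hm₂, (hM.nonAdj_iff_ne hm₁ hm₂).2 hne, rfl,
      hm₁, hm₂, hc₁, hc₂⟩

end IsMatching

theorem slack_support_rectangle_cover_general (n : ℕ)
    (U : Finset (Fin n)) (M : Finset (Sym2 (Fin n)))
    (hM : IsPM M) :
    ((0 < ((((M : Set (Sym2 (Fin n))) ∩ cutSet (U : Set (Fin n))).ncard : ℤ) - 1)) ↔
      ∃ e₁ e₂ : Sym2 (Fin n), ¬ e₁.IsDiag ∧ ¬ e₂.IsDiag ∧ NonAdj e₁ e₂ ∧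
        e₁ ∈ M ∧ e₂ ∈ M ∧ e₁ ∈ cutSet (U : Set (Fin n)) ∧ e₂ ∈ cutSet (U : Set (Fin n))) ∧
    (∀ k : ℕ, ((M : Set (Sym2 (Fin n))) ∩ cutSet (U : Set (Fin n))).ncard = k + 1 →
      {p : Finset (Sym2 (Fin n)) | ∃ e₁ e₂ : Sym2 (Fin n),
          ¬ e₁.IsDiag ∧ ¬ e₂.IsDiag ∧ NonAdj e₁ e₂ ∧ p = {e₁, e₂} ∧
          e₁ ∈ M ∧ e₂ ∈ M ∧
          e₁ ∈ cutSet (U : Set (Fin n)) ∧ e₂ ∈ cutSet (U : Set (Fin n))}.ncard =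
        (k + 1).choose 2) := by
  classical
  rw [ncard_coe_inter_eq_card_filter]
  refine ⟨?_, fun k hk => ?_⟩
  · rw [hM.1.exists_nonAdj_pair_iff]
    omega
  · rw [hM.1.nonAdj_pairs_eq_powersetCard, Set.ncard_coe_finset, Finset.card_powersetCard, hk]

/-- For the slack matrix `S_{U,M} = |M ∩ δ(U)| − 1` of the odd-set inequalities of the perfect
matching polytope of the complete graph on an even number `n` of nodes: an entry is positive iff
it is covered by one of the rectangles `𝓤_{e₁,e₂} × 𝓜_{e₁,e₂}` indexed by (unordered) pairs of
non-adjacent edges; moreover an entry with `S_{U,M} = k` (i.e. `|M ∩ δ(U)| = k + 1`) is covered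
by exactly `C(k+1,2)` of these rectangles. -/
theorem slack_support_rectangle_cover (n : ℕ) (hn : Even n)
    (U : Finset (Fin n)) (M : Finset (Sym2 (Fin n)))
    (hU : Odd U.card) (hM : IsPM M) :
    ((0 < ((((M : Set (Sym2 (Fin n))) ∩ cutSet (U : Set (Fin n))).ncard : ℤ) - 1)) ↔
      ∃ e₁ e₂ : Sym2 (Fin n), ¬ e₁.IsDiag ∧ ¬ e₂.IsDiag ∧ NonAdj e₁ e₂ ∧
        e₁ ∈ M ∧ e₂ ∈ M ∧ e₁ ∈ cutSet (U : Set (Fin n)) ∧ e₂ ∈ cutSet (U : Set (Fin n))) ∧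
    (∀ k : ℕ, ((M : Set (Sym2 (Fin n))) ∩ cutSet (U : Set (Fin n))).ncard = k + 1 →
      {p : Finset (Sym2 (Fin n)) | ∃ e₁ e₂ : Sym2 (Fin n),
          ¬ e₁.IsDiag ∧ ¬ e₂.IsDiag ∧ NonAdj e₁ e₂ ∧ p = {e₁, e₂} ∧
          e₁ ∈ M ∧ e₂ ∈ M ∧
          e₁ ∈ cutSet (U : Set (Fin n)) ∧ e₂ ∈ cutSet (U : Set (Fin n))}.ncard =
        (k + 1).choose 2) :=
  slack_support_rectangle_cover_general n U M hM
end

section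
/- Let ε > 0, let T be a partition, and let H ⊆ C × D be a 3-matching. If (T,H) is M-good, then (1/(1+ε))·p_{M,T}(H) ≤ p^ex_{M,T}(H) ≤ (1+ε)·p_{M,T}(H). -/
open scoped Classical

namespace MatchingLB

/-- Edges of the complete graph on `n` nodes. -/
abbrev Edge (n : ℕ) := Sym2 (Fin n)

/-- Number of nodes: `n = 3m(k−3) + 2k`. -/
def npar (k m : ℕ) : ℕ := 3 * m * (k - 3) + 2 * k

/-- Cut size: `t = ((m+1)/2)·(k−3) + 3`. -/
def tpar (k m : ℕ) : ℕ := (m + 1) / 2 * (k - 3) + 3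

/-- The cut `δ(U)`: all edges with exactly one endpoint in `U`. -/
def cutSet {n : ℕ} (U : Set (Fin n)) : Set (Edge n) :=
  {e | ∃ a b : Fin n, e = s(a, b) ∧ a ∈ U ∧ b ∉ U}

/-- A matching: a set of non-loop edges that are pairwise vertex disjoint. -/
def IsMatching {n : ℕ} (M : Finset (Edge n)) : Prop :=
  (∀ e ∈ M, ¬ e.IsDiag) ∧
  (∀ e ∈ M, ∀ f ∈ M, e ≠ f → ∀ v : Fin n, v ∈ e → v ∉ f)

/-- A perfect matching of the complete graph on `n` nodes. -/
def IsPM {n : ℕ} (M : Finset (Edge n)) : Prop :=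
  IsMatching M ∧ ∀ v : Fin n, ∃ e ∈ M, v ∈ e

/-- `Q_ℓ`: pairs `(U, M)` of a `t`-node cut and a perfect matching with `|δ(U) ∩ M| = ℓ`. -/
def Qset (n t ℓ : ℕ) : Set (Finset (Fin n) × Finset (Edge n)) :=
  {p | p.1.card = t ∧ IsPM p.2 ∧
    ((p.2 : Set (Edge n)) ∩ cutSet (p.1 : Set (Fin n))).ncard = ℓ}

/-- The uniform measure `μ_ℓ(𝓡) = |𝓡 ∩ Q_ℓ| / |Q_ℓ|` of a set of pairs on `Q_ℓ`. -/
noncomputable def mu (n t ℓ : ℕ) (R : Set (Finset (Fin n) × Finset (Edge n))) : ℝ :=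
  ((R ∩ Qset n t ℓ).ncard : ℝ) / ((Qset n t ℓ).ncard : ℝ)

/-- Labels of the blocks of a partition `T = (A₁,…,A_m, C, D, B₁,…,B_m)`. -/
inductive Lbl (m : ℕ) where
  | A (i : Fin m)
  | C
  | D
  | B (i : Fin m)
  deriving DecidableEq, Fintype

/-- A partition of the `n` nodes into blocks `A₁,…,A_m` of `k−3` nodes each, core sets `C` and
`D` of `k` nodes each, and blocks `B₁,…,B_m` of `2(k−3)` nodes each, encoded as a labelling. -/
def IsPartition (n k m : ℕ) (f : Fin n → Lbl m) : Prop :=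
  (∀ i, {v | f v = Lbl.A i}.ncard = k - 3) ∧
  ({v | f v = Lbl.C}.ncard = k) ∧
  ({v | f v = Lbl.D}.ncard = k) ∧
  (∀ i, {v | f v = Lbl.B i}.ncard = 2 * (k - 3))

def Cset {n m : ℕ} (f : Fin n → Lbl m) : Set (Fin n) := {v | f v = Lbl.C}

def Aset {n m : ℕ} (f : Fin n → Lbl m) (i : Fin m) : Set (Fin n) := {v | f v = Lbl.A i}

/-- A node lies in `C ∪ D`. -/
def inCD {n m : ℕ} (f : Fin n → Lbl m) (v : Fin n) : Prop := f v = Lbl.C ∨ f v = Lbl.D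

/-- `e ∈ E(T)`: the edge runs inside some `A_i`, inside `C ∪ D`, or inside some `B_i`. -/
def allowedEdge {n m : ℕ} (f : Fin n → Lbl m) (e : Edge n) : Prop :=
  ∃ a b : Fin n, e = s(a, b) ∧
    ((∃ i, f a = Lbl.A i ∧ f b = Lbl.A i) ∨ (inCD f a ∧ inCD f b) ∨
      (∃ i, f a = Lbl.B i ∧ f b = Lbl.B i))

/-- `e ∈ C × D`: the edge runs between `C` and `D`. -/
def betweenCD {n m : ℕ} (f : Fin n → Lbl m) (e : Edge n) : Prop :=
  ∃ a b : Fin n, e = s(a, b) ∧ f a = Lbl.C ∧ f b = Lbl.D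

/-- `e ∈ E(C ∪ D)`: the edge runs inside `C ∪ D`. -/
def insideCD {n m : ℕ} (f : Fin n → Lbl m) (e : Edge n) : Prop :=
  ∃ a b : Fin n, e = s(a, b) ∧ inCD f a ∧ inCD f b

/-- `𝓜_all(T)`: the perfect matchings respecting the partition. -/
def MallT {n m : ℕ} (f : Fin n → Lbl m) : Set (Finset (Edge n)) :=
  {M | IsPM M ∧ ∀ e ∈ M, allowedEdge f e}

/-- `𝓤_all(T)`: the `t`-node cuts `U ⊆ A ∪ C` containing all or none of the nodes of each
block `A_i`. -/
def UallT {n m : ℕ} (t : ℕ) (f : Fin n → Lbl m) : Set (Finset (Fin n)) :=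
  {U | U.card = t ∧ (∀ v ∈ U, (∃ i, f v = Lbl.A i) ∨ f v = Lbl.C) ∧
    ∀ i, Disjoint (U : Set (Fin n)) (Aset f i) ∨ Aset f i ⊆ (U : Set (Fin n))}

/-- `V(H)`: the nodes incident to the edges of `H`. -/
def VSet {n : ℕ} (H : Finset (Edge n)) : Set (Fin n) := {v | ∃ e ∈ H, v ∈ e}

/-- `p_{M,T}(H)`: the probability that a uniformly random `M ∈ 𝓜_all(T)` with `H ⊆ M`
lies in `𝓜`. -/
noncomputable def pM {n m : ℕ} (f : Fin n → Lbl m) (Mm : Set (Finset (Edge n)))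
    (H : Finset (Edge n)) : ℝ :=
  ({M | M ∈ MallT f ∧ H ⊆ M ∧ M ∈ Mm}.ncard : ℝ) /
    ({M | M ∈ MallT f ∧ H ⊆ M}.ncard : ℝ)

/-- `p^ex_{M,T}(H)`: the probability that a uniformly random `M ∈ 𝓜_all(T)` with
`M ∩ δ(C) = H` lies in `𝓜`. -/
noncomputable def pMex {n m : ℕ} (f : Fin n → Lbl m) (Mm : Set (Finset (Edge n)))
    (H : Finset (Edge n)) : ℝ :=
  ({M | M ∈ MallT f ∧ M.filter (· ∈ cutSet (Cset f)) = H ∧ M ∈ Mm}.ncard : ℝ) /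
    ({M | M ∈ MallT f ∧ M.filter (· ∈ cutSet (Cset f)) = H}.ncard : ℝ)

/-- `p_{U,T}(c)`: the probability that a uniformly random `U ∈ 𝓤_all(T)` with `c ⊆ U`
lies in `𝓤`. -/
noncomputable def pU {n m : ℕ} (t : ℕ) (f : Fin n → Lbl m) (Uu : Set (Finset (Fin n)))
    (c : Set (Fin n)) : ℝ :=
  ({U | U ∈ UallT t f ∧ c ⊆ (U : Set (Fin n)) ∧ U ∈ Uu}.ncard : ℝ) /
    ({U | U ∈ UallT t f ∧ c ⊆ (U : Set (Fin n))}.ncard : ℝ)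

/-- `p^ex_{U,T}(c)`: the probability that a uniformly random `U ∈ 𝓤_all(T)` with `U ∩ C = c`
lies in `𝓤`. -/
noncomputable def pUexSet {n m : ℕ} (t : ℕ) (f : Fin n → Lbl m) (Uu : Set (Finset (Fin n)))
    (c : Set (Fin n)) : ℝ :=
  ({U | U ∈ UallT t f ∧ (U : Set (Fin n)) ∩ Cset f = c ∧ U ∈ Uu}.ncard : ℝ) /
    ({U | U ∈ UallT t f ∧ (U : Set (Fin n)) ∩ Cset f = c}.ncard : ℝ)

/-- `p^ex_{U,T}(H) := p^ex_{U,T}(V(H) ∩ C)` for a matching `H ⊆ C × D`. -/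
noncomputable def pUexH {n m : ℕ} (t : ℕ) (f : Fin n → Lbl m) (Uu : Set (Finset (Fin n)))
    (H : Finset (Edge n)) : ℝ :=
  pUexSet t f Uu (VSet H ∩ Cset f)

/-- `H` is an `ℓ`-matching in the complete bipartite graph between `C` and `D`. -/
def IsCDMatching {n m : ℕ} (f : Fin n → Lbl m) (ℓ : ℕ) (H : Finset (Edge n)) : Prop :=
  IsMatching H ∧ H.card = ℓ ∧ ∀ e ∈ H, betweenCD f e

/-- `(T,H)` is `M`-good: `0 < (1/(1+ε))·p_{M,T}(H)` and every `k`-matching `F` with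
`H ⊆ F ⊆ E(C ∪ D)` satisfies `(1/(1+ε))·p_{M,T}(H) ≤ p_{M,T}(F) ≤ (1+ε)·p_{M,T}(H)`. -/
def MGood {n m : ℕ} (ε : ℝ) (k : ℕ) (f : Fin n → Lbl m) (Mm : Set (Finset (Edge n)))
    (H : Finset (Edge n)) : Prop :=
  0 < (1 / (1 + ε)) * pM f Mm H ∧
  ∀ F : Finset (Edge n), IsMatching F → F.card = k → H ⊆ F → (∀ e ∈ F, insideCD f e) →
    (1 / (1 + ε)) * pM f Mm H ≤ pM f Mm F ∧ pM f Mm F ≤ (1 + ε) * pM f Mm H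

/-- `(T,H)` is `U`-good:
`0 < (1/(1+ε))·p^ex_{U,T}(H) ≤ p^ex_{U,T}(C) ≤ (1+ε)·p^ex_{U,T}(H)`. -/
def UGood {n m : ℕ} (ε : ℝ) (t : ℕ) (f : Fin n → Lbl m) (Uu : Set (Finset (Fin n)))
    (H : Finset (Edge n)) : Prop :=
  0 < (1 / (1 + ε)) * pUexH t f Uu H ∧
  (1 / (1 + ε)) * pUexH t f Uu H ≤ pUexSet t f Uu (Cset f) ∧
  pUexSet t f Uu (Cset f) ≤ (1 + ε) * pUexH t f Uu H

/-- `(T,H)` is good: both `M`-good and `U`-good. -/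
def Good {n m : ℕ} (ε : ℝ) (k t : ℕ) (f : Fin n → Lbl m)
    (Mm : Set (Finset (Edge n))) (Uu : Set (Finset (Fin n))) (H : Finset (Edge n)) : Prop :=
  MGood ε k f Mm H ∧ UGood ε t f Uu H

/-- `(T,H)` is small: `p^ex_{M,T}(H) ≤ 2^{−δm}` or `p^ex_{U,T}(H) ≤ 2^{−δm}`. -/
def Small {n m : ℕ} (δ : ℝ) (t : ℕ) (f : Fin n → Lbl m)
    (Mm : Set (Finset (Edge n))) (Uu : Set (Finset (Fin n))) (H : Finset (Edge n)) : Prop :=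
  pMex f Mm H ≤ (2 : ℝ) ^ (-(δ * (m : ℝ))) ∨ pUexH t f Uu H ≤ (2 : ℝ) ^ (-(δ * (m : ℝ)))

/-- `(T,H)` is bad: neither good nor small. -/
def Bad {n m : ℕ} (ε δ : ℝ) (k t : ℕ) (f : Fin n → Lbl m)
    (Mm : Set (Finset (Edge n))) (Uu : Set (Finset (Fin n))) (H : Finset (Edge n)) : Prop :=
  ¬ Good ε k t f Mm Uu H ∧ ¬ Small δ t f Mm Uu H

/-- `(T,H)` is `U`-bad: neither `U`-good nor small. -/
def UBad {n m : ℕ} (ε δ : ℝ) (t : ℕ) (f : Fin n → Lbl m)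
    (Mm : Set (Finset (Edge n))) (Uu : Set (Finset (Fin n))) (H : Finset (Edge n)) : Prop :=
  ¬ UGood ε t f Uu H ∧ ¬ Small δ t f Mm Uu H

/-- `𝒫(U,M)`: the partitions `T` compatible with the pair `(U, M)`, i.e. `U ∈ 𝓤_all(T)` with
`U ∩ C = V(H) ∩ C` and `M ∈ 𝓜_all(T)` with `M ∩ (C × D) = H`, where `H = δ(U) ∩ M`. -/
def PSet (n k m t : ℕ) (U : Finset (Fin n)) (M H : Finset (Edge n)) :
    Set (Fin n → Lbl m) :=
  {f | IsPartition n k m f ∧ U ∈ UallT t f ∧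
    (U : Set (Fin n)) ∩ Cset f = VSet H ∩ Cset f ∧
    M ∈ MallT f ∧ M.filter (betweenCD f) = H}

/-- Expectation of `g` over a uniformly random partition `T`. -/
noncomputable def expPart (n k m : ℕ) (g : (Fin n → Lbl m) → ℝ) : ℝ :=
  (∑ f ∈ Finset.univ.filter (fun f => IsPartition n k m f), g f) /
    ((Finset.univ.filter (fun f => IsPartition n k m f)).card : ℝ)

/-- Expectation of `g` over a uniformly random 3-matching `H` in the complete bipartite graph
between `C` and `D`. -/
noncomputable def expH3 {n m : ℕ} (f : Fin n → Lbl m) (g : Finset (Edge n) → ℝ) : ℝ :=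
  (∑ H ∈ Finset.univ.filter (fun H => IsCDMatching f 3 H), g H) /
    ((Finset.univ.filter (fun H => IsCDMatching f 3 H)).card : ℝ)

/-!
An `M ∈ 𝓜_all(T)` consists of a perfect matching `F` of `C ∪ D` (its `k` edges inside `C ∪ D`)
and edges inside the blocks `A_i`, `B_i`; in particular `M ∩ δ(C) = F ∩ δ(C)`. So the matchings
with `M ∩ δ(C) = H` are the disjoint union, over the perfect matchings `F` of `C ∪ D` with
`F ∩ δ(C) = H`, of the matchings containing `F`, and `p^ex_{M,T}(H)` is the mediant of the ratios
`p_{M,T}(F)`. Each such `F` is a `k`-matching with `H ⊆ F ⊆ E(C ∪ D)`, so goodness puts every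
`p_{M,T}(F)`, hence the mediant, between `p_{M,T}(H)/(1+ε)` and `(1+ε)·p_{M,T}(H)`. The mediant
has a nonzero denominator: goodness provides some `M ⊇ H`, and since `|H| = 3` and `|C| = k` are
both odd, exchanging pairs of surplus cut edges turns `M` into one whose cut is exactly `H`.
-/

open Finset

section Matchings

variable {n : ℕ}

lemma mem_cutSet_mk {U : Set (Fin n)} {x y : Fin n} :
    s(x, y) ∈ cutSet U ↔ (x ∈ U ∧ y ∉ U) ∨ (y ∈ U ∧ x ∉ U) := by
  constructor
  · rintro ⟨a, b, he, ha, hb⟩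
    rcases Sym2.eq_iff.mp he with ⟨rfl, rfl⟩ | ⟨rfl, rfl⟩
    exacts [Or.inl ⟨ha, hb⟩, Or.inr ⟨ha, hb⟩]
  · rintro (⟨hx, hy⟩ | ⟨hy, hx⟩)
    exacts [⟨x, y, rfl, hx, hy⟩, ⟨y, x, Sym2.eq_swap, hy, hx⟩]

lemma IsMatching.mono {M F : Finset (Edge n)} (hM : IsMatching M) (h : F ⊆ M) :
    IsMatching F :=
  ⟨fun e he => hM.1 e (h he), fun e he g hg => hM.2 e (h he) g (h hg)⟩

lemma IsMatching.insert {N : Finset (Edge n)} {e : Edge n} (hN : IsMatching N)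
    (he : ¬ e.IsDiag) (hdisj : ∀ g ∈ N, ∀ v ∈ e, v ∉ g) : IsMatching (insert e N) := by
  refine ⟨fun g hg => ?_, fun g hg g' hg' hne v hv => ?_⟩
  · rcases mem_insert.mp hg with rfl | hg
    exacts [he, hN.1 g hg]
  · rcases mem_insert.mp hg with rfl | hg <;>
      rcases mem_insert.mp hg' with hg' | hg'
    · exact absurd hg'.symm hne
    · exact hdisj g' hg' v hv
    · exact hg' ▸ fun hv' => hdisj g hg v hv' hv
    · exact hN.2 g hg g' hg' hne v hv

lemma IsMatching.card_biUnion_toFinset {F : Finset (Edge n)} (hF : IsMatching F) :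
    #(F.biUnion Sym2.toFinset) = 2 * #F := by
  rw [card_biUnion fun e he e' he' hne => disjoint_left.mpr fun v hv hv' =>
      hF.2 e he e' he' hne v (Sym2.mem_toFinset.mp hv) (Sym2.mem_toFinset.mp hv'),
    sum_congr rfl fun e he => Sym2.card_toFinset_of_not_isDiag e (hF.1 e he),
    sum_const, smul_eq_mul, mul_comm]

lemma card_filter_toFinset_modEq {U : Set (Fin n)} {e : Edge n} (he : ¬ e.IsDiag) :
    #(e.toFinset.filter (· ∈ U)) ≡ if e ∈ cutSet U then 1 else 0 [MOD 2] := by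
  induction e using Sym2.ind with
  | _ x y =>
    rw [Sym2.mk_isDiag_iff] at he
    rw [Sym2.toFinset_mk_eq, filter_insert, filter_singleton]
    by_cases hx : x ∈ U <;> by_cases hy : y ∈ U <;> simp [hx, hy, he, mem_cutSet_mk] <;> rfl

/-- Each vertex of `U` is matched either inside `U`, in pairs, or across the cut. -/
theorem IsPM.card_filter_cutSet_modEq {M : Finset (Edge n)} (hM : IsPM M) (U : Set (Fin n)) :
    #(M.filter (· ∈ cutSet U)) ≡ U.ncard [MOD 2] := by
  have hU : ↑(M.biUnion fun e => e.toFinset.filter (· ∈ U)) = U := by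
    ext v
    simp only [coe_biUnion, coe_filter, Sym2.mem_toFinset, Set.mem_iUnion, Set.mem_ofPred_eq,
      mem_coe]
    exact ⟨fun ⟨_, _, _, hv⟩ => hv, fun hv => (hM.2 v).imp fun e he => ⟨he.1, he.2, hv⟩⟩
  have hdisj : (M : Set (Edge n)).PairwiseDisjoint fun e => e.toFinset.filter (· ∈ U) :=
    fun e he e' he' hne => disjoint_left.mpr fun v hv hv' =>
      hM.1.2 e he e' he' hne v (Sym2.mem_toFinset.mp (mem_filter.mp hv).1)
        (Sym2.mem_toFinset.mp (mem_filter.mp hv').1)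
  rw [← hU, Set.ncard_coe_finset, card_biUnion hdisj, hU, card_filter]
  exact Nat.ModEq.sum fun e he => (card_filter_toFinset_modEq (hM.1.1 e he)).symm

end Matchings

section Exchange

variable {n : ℕ}

def exchange (M : Finset (Edge n)) (a b c d : Fin n) : Finset (Edge n) :=
  insert s(a, c) (insert s(b, d) ((M.erase s(a, b)).erase s(c, d)))

variable {M : Finset (Edge n)} {a b c d : Fin n}

lemma mem_exchange {g : Edge n} :
    g ∈ exchange M a b c d ↔
      g = s(a, c) ∨ g = s(b, d) ∨ (g ∈ M ∧ g ≠ s(a, b) ∧ g ≠ s(c, d)) := by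
  simp only [exchange, mem_insert, mem_erase]
  tauto

theorem IsPM.exchange (hM : IsPM M) (hab : s(a, b) ∈ M) (hcd : s(c, d) ∈ M)
    (hne : s(a, b) ≠ s(c, d)) : IsPM (exchange M a b c d) := by
  set N := (M.erase s(a, b)).erase s(c, d)
  have hNM : N ⊆ M := (erase_subset _ _).trans (erase_subset _ _)
  have hN : ∀ g ∈ N, ∀ v, v ∈ s(a, b) ∨ v ∈ s(c, d) → v ∉ g := by
    intro g hg v hv
    obtain ⟨hgcd, hgab, hgM⟩ : g ≠ s(c, d) ∧ g ≠ s(a, b) ∧ g ∈ M := by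
      simpa [N, mem_erase] using hg
    rcases hv with hv | hv
    exacts [hM.1.2 _ hab g hgM (Ne.symm hgab) v hv, hM.1.2 _ hcd g hgM (Ne.symm hgcd) v hv]
  have hsep : ∀ v ∈ s(a, b), v ∉ s(c, d) := hM.1.2 _ hab _ hcd hne
  have hab' : a ≠ b := by simpa using hM.1.1 _ hab
  have hcd' : c ≠ d := by simpa using hM.1.1 _ hcd
  have hac : a ≠ c := fun h => hsep a (by simp) (by simp [h])
  have had : a ≠ d := fun h => hsep a (by simp) (by simp [h])
  have hbc : b ≠ c := fun h => hsep b (by simp) (by simp [h])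
  have hbd : b ≠ d := fun h => hsep b (by simp) (by simp [h])
  refine ⟨((hM.1.mono hNM).insert (by simpa using hbd) ?_).insert (by simpa using hac) ?_, ?_⟩
  · intro g hg v hv
    exact hN g hg v (by rcases Sym2.mem_iff.mp hv with rfl | rfl <;> simp)
  · intro g hg v hv
    rcases mem_insert.mp hg with rfl | hg
    · rcases Sym2.mem_iff.mp hv with rfl | rfl <;> simp [*, Ne.symm hbc]
    · exact hN g hg v (by rcases Sym2.mem_iff.mp hv with rfl | rfl <;> simp)
  · intro v
    obtain ⟨e, he, hve⟩ := hM.2 v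
    by_cases h : e = s(a, b) ∨ e = s(c, d)
    · rcases h with rfl | rfl <;> rcases Sym2.mem_iff.mp hve with rfl | rfl
      exacts [⟨_, mem_exchange.mpr (Or.inl rfl), by simp⟩,
        ⟨_, mem_exchange.mpr (Or.inr (Or.inl rfl)), by simp⟩,
        ⟨_, mem_exchange.mpr (Or.inl rfl), by simp⟩,
        ⟨_, mem_exchange.mpr (Or.inr (Or.inl rfl)), by simp⟩]
    · exact ⟨e, mem_exchange.mpr (Or.inr (Or.inr ⟨he, not_or.mp h⟩)), hve⟩

end Exchange

section Partition

variable {n m k : ℕ} {f : Fin n → Lbl m} {M : Finset (Edge n)}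

lemma inCD_of_insideCD {e : Edge n} (he : insideCD f e) {v : Fin n} (hv : v ∈ e) : inCD f v := by
  obtain ⟨x, y, rfl, hx, hy⟩ := he
  rcases Sym2.mem_iff.mp hv with rfl | rfl
  exacts [hx, hy]

lemma insideCD_of_betweenCD {e : Edge n} (he : betweenCD f e) : insideCD f e := by
  obtain ⟨a, b, rfl, ha, hb⟩ := he
  exact ⟨a, b, rfl, Or.inl ha, Or.inr hb⟩

lemma mem_cutSet_of_betweenCD {e : Edge n} (he : betweenCD f e) : e ∈ cutSet (Cset f) := by
  obtain ⟨a, b, rfl, ha, hb⟩ := he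
  exact ⟨a, b, rfl, ha, by simp [Cset, hb]⟩

lemma insideCD_of_mem_MallT (hM : M ∈ MallT f) {e : Edge n} (he : e ∈ M) {v : Fin n}
    (hv : v ∈ e) (hvCD : inCD f v) : insideCD f e := by
  obtain ⟨x, y, rfl, hxy⟩ := hM.2 e he
  rcases hxy with ⟨i, hx, hy⟩ | hxy | ⟨i, hx, hy⟩
  · rcases Sym2.mem_iff.mp hv with rfl | rfl <;> rcases hvCD with h | h <;> simp_all
  · exact ⟨x, y, rfl, hxy⟩
  · rcases Sym2.mem_iff.mp hv with rfl | rfl <;> rcases hvCD with h | h <;> simp_all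

lemma betweenCD_of_mem_cutSet (hM : M ∈ MallT f) {e : Edge n} (he : e ∈ M)
    (hc : e ∈ cutSet (Cset f)) : betweenCD f e := by
  obtain ⟨a, b, rfl, ha, hb⟩ := hc
  have hbCD : inCD f b := inCD_of_insideCD (insideCD_of_mem_MallT hM he (by simp) (Or.inl ha))
    (by simp)
  exact ⟨a, b, rfl, ha, hbCD.resolve_left hb⟩

lemma filter_cutSet_filter_insideCD (hM : M ∈ MallT f) :
    (M.filter (insideCD f)).filter (· ∈ cutSet (Cset f)) = M.filter (· ∈ cutSet (Cset f)) := by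
  ext e
  simp only [mem_filter, and_congr_left_iff, and_iff_left_iff_imp]
  exact fun hc he => insideCD_of_betweenCD (betweenCD_of_mem_cutSet hM he hc)

lemma card_filter_inCD (hf : IsPartition n k m f) : #(univ.filter (inCD f)) = 2 * k := by
  have hC : #(univ.filter (f · = Lbl.C)) = k := by
    simpa [Set.ncard_eq_toFinset_card'] using hf.2.1
  have hD : #(univ.filter (f · = Lbl.D)) = k := by
    simpa [Set.ncard_eq_toFinset_card'] using hf.2.2.1
  have hCD : univ.filter (inCD f) =
      univ.filter (f · = Lbl.C) ∪ univ.filter (f · = Lbl.D) := by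
    ext v
    simp [inCD]
  rw [hCD, card_union_of_disjoint (disjoint_filter.mpr fun v _ h => by simp [h]),
    hC, hD, two_mul]

lemma card_filter_insideCD (hf : IsPartition n k m f) (hM : M ∈ MallT f) :
    #(M.filter (insideCD f)) = k := by
  have hV : (M.filter (insideCD f)).biUnion Sym2.toFinset = univ.filter (inCD f) := by
    ext v
    simp only [mem_biUnion, mem_filter, Sym2.mem_toFinset, mem_univ, true_and]
    refine ⟨fun ⟨e, ⟨_, he⟩, hv⟩ => inCD_of_insideCD he hv, fun hv => ?_⟩
    obtain ⟨e, he, hve⟩ := hM.1.2 v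
    exact ⟨e, ⟨he, insideCD_of_mem_MallT hM he hve hv⟩, hve⟩
  have := (hM.1.1.mono (M.filter_subset (insideCD f))).card_biUnion_toFinset
  rw [hV, card_filter_inCD hf] at this
  omega

end Partition

section Decomposition

variable {n m k : ℕ} {f : Fin n → Lbl m}

noncomputable def cdMatchingsWithCut (k : ℕ) (f : Fin n → Lbl m) (H : Finset (Edge n)) :
    Finset (Finset (Edge n)) :=
  univ.filter fun F => IsMatching F ∧ #F = k ∧ (∀ e ∈ F, insideCD f e) ∧
    F.filter (· ∈ cutSet (Cset f)) = H

lemma filter_insideCD_mem_cdMatchingsWithCut (hf : IsPartition n k m f) {M H : Finset (Edge n)}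
    (hM : M ∈ MallT f) (hcut : M.filter (· ∈ cutSet (Cset f)) = H) :
    M.filter (insideCD f) ∈ cdMatchingsWithCut k f H := by
  exact mem_filter.mpr ⟨mem_univ _, hM.1.1.mono (M.filter_subset _), card_filter_insideCD hf hM,
    fun e he => (mem_filter.mp he).2, (filter_cutSet_filter_insideCD hM).trans hcut⟩

lemma filter_cutSet_eq_and_filter_insideCD_eq_iff (hf : IsPartition n k m f)
    {M F H : Finset (Edge n)} (hM : M ∈ MallT f) (hF : F ∈ cdMatchingsWithCut k f H) :
    (M.filter (· ∈ cutSet (Cset f)) = H ∧ M.filter (insideCD f) = F) ↔ F ⊆ M := by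
  obtain ⟨-, hFk, hFin, hFcut⟩ := (mem_filter.mp hF).2
  refine ⟨fun ⟨_, hres⟩ => hres ▸ filter_subset _ _, fun hFM => ?_⟩
  have hres : M.filter (insideCD f) = F :=
    (eq_of_subset_of_card_le (fun e he => mem_filter.mpr ⟨hFM he, hFin e he⟩)
      (by rw [card_filter_insideCD hf hM, hFk])).symm
  exact ⟨by rw [← filter_cutSet_filter_insideCD hM, hres, hFcut], hres⟩

/-- Sort `M` by its edges inside `C ∪ D`. -/
theorem ncard_filter_cutSet_eq_sum (hf : IsPartition n k m f) (H : Finset (Edge n))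
    (Q : Finset (Edge n) → Prop) :
    {M | M ∈ MallT f ∧ M.filter (· ∈ cutSet (Cset f)) = H ∧ Q M}.ncard =
      ∑ F ∈ cdMatchingsWithCut k f H, {M | M ∈ MallT f ∧ F ⊆ M ∧ Q M}.ncard := by
  simp only [Set.ncard_eq_toFinset_card', Set.toFinset_ofPred]
  rw [card_eq_sum_card_fiberwise (f := (filter (insideCD f) ·)) fun M hM =>
    filter_insideCD_mem_cdMatchingsWithCut hf (mem_filter.mp hM).2.1
      (mem_filter.mp hM).2.2.1]
  refine sum_congr rfl fun F hF => congrArg card (ext fun M => ?_)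
  simp only [mem_filter, mem_univ, true_and]
  constructor
  · rintro ⟨⟨hM, hcut, hQ⟩, hres⟩
    exact ⟨hM, (filter_cutSet_eq_and_filter_insideCD_eq_iff hf hM hF).mp ⟨hcut, hres⟩, hQ⟩
  · rintro ⟨hM, hFM, hQ⟩
    obtain ⟨hcut, hres⟩ := (filter_cutSet_eq_and_filter_insideCD_eq_iff hf hM hF).mpr hFM
    exact ⟨⟨hM, hcut, hQ⟩, hres⟩

end Decomposition

section ExactCut

variable {n m k : ℕ} {f : Fin n → Lbl m} {M : Finset (Edge n)} {a b c d : Fin n}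

lemma exchange_mem_MallT (hM : M ∈ MallT f) (hab : s(a, b) ∈ M) (hcd : s(c, d) ∈ M)
    (hne : s(a, b) ≠ s(c, d)) (ha : inCD f a) (hb : inCD f b) (hc : inCD f c)
    (hd : inCD f d) : exchange M a b c d ∈ MallT f := by
  refine ⟨hM.1.exchange hab hcd hne, fun g hg => ?_⟩
  rcases mem_exchange.mp hg with rfl | rfl | ⟨hg, -⟩
  exacts [⟨a, c, rfl, Or.inr (Or.inl ⟨ha, hc⟩)⟩, ⟨b, d, rfl, Or.inr (Or.inl ⟨hb, hd⟩)⟩,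
    hM.2 g hg]

lemma filter_cutSet_exchange (ha : f a = Lbl.C) (hb : f b = Lbl.D) (hc : f c = Lbl.C)
    (hd : f d = Lbl.D) :
    (exchange M a b c d).filter (· ∈ cutSet (Cset f)) =
      M.filter (· ∈ cutSet (Cset f)) \ {s(a, b), s(c, d)} := by
  have hac : s(a, c) ∉ cutSet (Cset f) := by simp [mem_cutSet_mk, Cset, ha, hc]
  have hbd : s(b, d) ∉ cutSet (Cset f) := by simp [mem_cutSet_mk, Cset, hb, hd]
  ext g
  simp only [mem_filter, mem_exchange, mem_sdiff, mem_insert, mem_singleton, not_or]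
  constructor
  · rintro ⟨rfl | rfl | ⟨hg, hne⟩, hcut⟩
    exacts [absurd hcut hac, absurd hcut hbd, ⟨⟨hg, hcut⟩, hne⟩]
  · rintro ⟨⟨hg, hcut⟩, hne⟩
    exact ⟨Or.inr (Or.inr ⟨hg, hne⟩), hcut⟩

/-- By parity the cut edges of `M` outside `H` come in an even number, and exchanging two of
them, `ab` and `cd` with `a, c ∈ C`, for `ac` and `bd` removes both from the cut. -/
theorem exists_mem_MallT_filter_cutSet_eq (hf : IsPartition n k m f) {H : Finset (Edge n)}
    (hpar : #H ≡ k [MOD 2]) (hH : ∀ e ∈ H, betweenCD f e) (hM : M ∈ MallT f) (hHM : H ⊆ M) :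
    ∃ M' ∈ MallT f, M'.filter (· ∈ cutSet (Cset f)) = H := by
  induction hj : #(M.filter (· ∈ cutSet (Cset f)) \ H) using Nat.strong_induction_on
    generalizing M with
  | _ j ih =>
  have hHcut : H ⊆ M.filter (· ∈ cutSet (Cset f)) := fun e he =>
    mem_filter.mpr ⟨hHM he, mem_cutSet_of_betweenCD (hH e he)⟩
  rcases Nat.lt_or_ge j 2 with hj2 | hj2
  · have hcard : j + #H = #(M.filter (· ∈ cutSet (Cset f))) :=
      hj ▸ card_sdiff_add_card_eq_card hHcut
    have hmod := hM.1.card_filter_cutSet_modEq (Cset f)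
    rw [← hcard, show (Cset f).ncard = k from hf.2.1] at hmod
    have hj0 : j = 0 := by unfold Nat.ModEq at hpar hmod; omega
    subst hj0
    exact ⟨M, hM, Finset.Subset.antisymm
      (sdiff_eq_empty_iff_subset.mp (card_eq_zero.mp hj)) hHcut⟩
  · obtain ⟨e₁, he₁, e₂, he₂, hne⟩ := one_lt_card.mp (hj ▸ hj2)
    obtain ⟨⟨he₁M, hc₁⟩, he₁H⟩ := mem_sdiff.mp he₁ |>.imp_left mem_filter.mp
    obtain ⟨⟨he₂M, hc₂⟩, he₂H⟩ := mem_sdiff.mp he₂ |>.imp_left mem_filter.mp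
    obtain ⟨a, b, rfl, ha, hb⟩ := betweenCD_of_mem_cutSet hM he₁M hc₁
    obtain ⟨c, d, rfl, hc, hd⟩ := betweenCD_of_mem_cutSet hM he₂M hc₂
    refine ih (j - 2) (by omega) (exchange_mem_MallT hM he₁M he₂M hne (Or.inl ha) (Or.inr hb)
      (Or.inl hc) (Or.inr hd)) (fun g hg => mem_exchange.mpr (Or.inr (Or.inr
        ⟨hHM hg, fun h => he₁H (h ▸ hg), fun h => he₂H (h ▸ hg)⟩))) ?_
    rw [filter_cutSet_exchange ha hb hc hd, sdiff_sdiff_comm,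
      card_sdiff_of_subset (insert_subset he₁ (singleton_subset_iff.mpr he₂)),
      card_pair hne, hj]

end ExactCut

section Mediant

variable {ι : Type*} {s : Finset ι} {a b : ι → ℝ} {c : ℝ}

lemma le_sum_div_sum (hb : 0 < ∑ i ∈ s, b i) (h : ∀ i ∈ s, c * b i ≤ a i) :
    c ≤ (∑ i ∈ s, a i) / ∑ i ∈ s, b i := by
  rw [le_div_iff₀ hb, mul_sum]
  exact sum_le_sum h

lemma sum_div_sum_le (hb : 0 < ∑ i ∈ s, b i) (h : ∀ i ∈ s, a i ≤ c * b i) :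
    (∑ i ∈ s, a i) / ∑ i ∈ s, b i ≤ c := by
  rw [div_le_iff₀ hb, mul_sum]
  exact sum_le_sum h

end Mediant

section Probabilities

variable {n m k : ℕ} {f : Fin n → Lbl m} {Mm : Set (Finset (Edge n))}

lemma mul_ncard_le_of_le_pM {F : Finset (Edge n)} {c : ℝ} (h : c ≤ pM f Mm F) :
    c * {M | M ∈ MallT f ∧ F ⊆ M}.ncard ≤ {M | M ∈ MallT f ∧ F ⊆ M ∧ M ∈ Mm}.ncard := by
  rcases Nat.eq_zero_or_pos {M | M ∈ MallT f ∧ F ⊆ M}.ncard with h0 | hpos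
  · simp [h0]
  · exact (le_div_iff₀ (by exact_mod_cast hpos)).mp h

lemma ncard_le_mul_of_pM_le {F : Finset (Edge n)} {c : ℝ} (h : pM f Mm F ≤ c) :
    {M | M ∈ MallT f ∧ F ⊆ M ∧ M ∈ Mm}.ncard ≤ c * {M | M ∈ MallT f ∧ F ⊆ M}.ncard := by
  rcases Nat.eq_zero_or_pos {M | M ∈ MallT f ∧ F ⊆ M}.ncard with h0 | hpos
  · have hle : {M | M ∈ MallT f ∧ F ⊆ M ∧ M ∈ Mm}.ncard ≤ {M | M ∈ MallT f ∧ F ⊆ M}.ncard :=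
      Set.ncard_le_ncard (fun M hM => ⟨hM.1, hM.2.1⟩)
    rw [h0] at hle
    rw [h0, Nat.le_zero.mp hle]
    simp
  · exact (div_le_iff₀ (by exact_mod_cast hpos)).mp h

lemma ncard_filter_cutSet_eq_sum' (hf : IsPartition n k m f) (H : Finset (Edge n)) :
    {M | M ∈ MallT f ∧ M.filter (· ∈ cutSet (Cset f)) = H}.ncard =
      ∑ F ∈ cdMatchingsWithCut k f H, {M | M ∈ MallT f ∧ F ⊆ M}.ncard := by
  simpa using ncard_filter_cutSet_eq_sum hf H fun _ => True

lemma pMex_eq_sum_div_sum (hf : IsPartition n k m f) (H : Finset (Edge n)) :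
    pMex f Mm H =
      (∑ F ∈ cdMatchingsWithCut k f H, ({M | M ∈ MallT f ∧ F ⊆ M ∧ M ∈ Mm}.ncard : ℝ)) /
        ∑ F ∈ cdMatchingsWithCut k f H, ({M | M ∈ MallT f ∧ F ⊆ M}.ncard : ℝ) := by
  rw [pMex, ncard_filter_cutSet_eq_sum hf H (· ∈ Mm), ncard_filter_cutSet_eq_sum' hf H]
  push_cast
  rfl

end Probabilities

theorem pMex_bounds_of_MGood_general (k m : ℕ) (hk : Odd k)
    (ε : ℝ) (Mm : Set (Finset (Edge (npar k m))))
    (f : Fin (npar k m) → Lbl m) (hf : IsPartition (npar k m) k m f)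
    (H : Finset (Edge (npar k m))) (hH : IsCDMatching f 3 H)
    (hgood : MGood ε k f Mm H) :
    (1 / (1 + ε)) * pM f Mm H ≤ pMex f Mm H ∧
      pMex f Mm H ≤ (1 + ε) * pM f Mm H := by
  obtain ⟨hpos, hbounds⟩ := hgood
  obtain ⟨M, hM, hHM, -⟩ := Set.nonempty_of_ncard_ne_zero
    (s := {M | M ∈ MallT f ∧ H ⊆ M ∧ M ∈ Mm}) fun h => by
      rw [pM, h] at hpos
      simp at hpos
  have hpar : #H ≡ k [MOD 2] := by rw [hH.2.1]; exact (Nat.odd_iff.mp hk).symm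
  obtain ⟨M', hM', hcut⟩ := exists_mem_MallT_filter_cutSet_eq hf hpar hH.2.2 hM hHM
  have hden : 0 < ∑ F ∈ cdMatchingsWithCut k f H, ({M | M ∈ MallT f ∧ F ⊆ M}.ncard : ℝ) := by
    rw [← Nat.cast_sum, ← ncard_filter_cutSet_eq_sum' hf H]
    exact Nat.cast_pos.mpr <| (Set.ncard_pos (Set.toFinite _)).mpr ⟨M', hM', hcut⟩
  have hratio : ∀ F ∈ cdMatchingsWithCut k f H, (1 / (1 + ε)) * pM f Mm H ≤ pM f Mm F ∧
      pM f Mm F ≤ (1 + ε) * pM f Mm H := fun F hF =>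
    let ⟨hFm, hFk, hFin, hFcut⟩ := (mem_filter.mp hF).2
    hbounds F hFm hFk (hFcut ▸ filter_subset _ _) hFin
  rw [pMex_eq_sum_div_sum hf]
  exact ⟨le_sum_div_sum hden fun F hF => mul_ncard_le_of_le_pM (hratio F hF).1,
    sum_div_sum_le hden fun F hF => ncard_le_mul_of_pM_le (hratio F hF).2⟩

/-- If `(T,H)` is `M`-good for a 3-matching `H ⊆ C × D`, then
`(1/(1+ε))·p_{M,T}(H) ≤ p^ex_{M,T}(H) ≤ (1+ε)·p_{M,T}(H)`. -/
theorem pMex_bounds_of_MGood (k m : ℕ) (hk : Odd k) (hk3 : 3 ≤ k) (hm : Odd m)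
    (ε : ℝ) (hε : 0 < ε)
    (Mm : Set (Finset (Edge (npar k m)))) (hMm : ∀ M ∈ Mm, IsPM M)
    (f : Fin (npar k m) → Lbl m) (hf : IsPartition (npar k m) k m f)
    (H : Finset (Edge (npar k m))) (hH : IsCDMatching f 3 H)
    (hgood : MGood ε k f Mm H) :
    (1 / (1 + ε)) * pM f Mm H ≤ pMex f Mm H ∧
      pMex f Mm H ≤ (1 + ε) * pM f Mm H :=
  pMex_bounds_of_MGood_general k m hk ε Mm f hf H hH hgood

end MatchingLB
end

section
/- Let ε > 0 and fix a rectangle 𝓡 = 𝓤 × 𝓜 with μ₁(𝓡) = 0. For any partition T and any k-matching F ⊆ C × D, the fraction of 3-element subsets H of F for which (T,H) is good is at most 100/k²: Pr_{H ∼ uniform on 3-element subsets of F}[GOOD(T,H)] ≤ 100/k². -/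
open scoped Classical

namespace MatchingLB

/-! If `(T,H₁)` is `U`-good and `(T,H₂)` is `M`-good, there is `U ∈ 𝓤` with
`U ∩ C = V(H₁) ∩ C`. When `|H₁ ∩ H₂| ≤ 1`, the matching `H₂` extends to a perfect matching `F'`
of `C ∪ D` that crosses `δ(U)` exactly once: the edges of `H₁ ∩ H₂` cross it, and the remaining
nodes of `C ∩ U` are paired among themselves, with one of them matched outside `U` when their
number `|H₁ \ H₂|` is odd. `M`-goodness then gives `M ∈ 𝓜` containing `F'`, and since blocks
`A_i` and `B_i` do not meet `δ(U)`, `|δ(U) ∩ M| = 1`, which `μ₁(𝓡) = 0` forbids.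
Hence the good 3-subsets of `F` pairwise share two edges, so there are at most `3k` of them,
and `3k / C(k,3) ≤ 100 / k²`. -/

variable {n : ℕ}

lemma mem_cutSet_iff {U : Set (Fin n)} {a b : Fin n} :
    s(a, b) ∈ cutSet U ↔ (a ∈ U ∧ b ∉ U) ∨ (b ∈ U ∧ a ∉ U) := by
  constructor
  · rintro ⟨x, y, hxy, hx, hy⟩
    rcases Sym2.eq_iff.mp hxy with ⟨rfl, rfl⟩ | ⟨rfl, rfl⟩
    exacts [Or.inl ⟨hx, hy⟩, Or.inr ⟨hx, hy⟩]
  · rintro (⟨hx, hy⟩ | ⟨hx, hy⟩)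
    exacts [⟨a, b, rfl, hx, hy⟩, ⟨b, a, Sym2.eq_swap, hx, hy⟩]

lemma notMem_cutSet {U : Set (Fin n)} {e : Edge n} (h : ∀ v ∈ e, ∀ w ∈ e, v ∈ U → w ∈ U) :
    e ∉ cutSet U := by
  rintro ⟨a, b, rfl, ha, hb⟩
  exact hb (h a (Sym2.mem_mk_left a b) b (Sym2.mem_mk_right a b) ha)

lemma ncard_coe_inter_cutSet (M : Finset (Edge n)) (U : Set (Fin n)) :
    ((M : Set (Edge n)) ∩ cutSet U).ncard = (M.filter (· ∈ cutSet U)).card := by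
  rw [← Set.ncard_coe_finset, Finset.coe_filter]
  rfl

lemma VSet_union (P Q : Finset (Edge n)) : VSet (P ∪ Q) = VSet P ∪ VSet Q := by
  ext v
  simp only [VSet, Finset.mem_union, or_and_right, exists_or, Set.mem_union, Set.mem_ofPred_eq]

lemma VSet_insert (e : Edge n) (P : Finset (Edge n)) :
    VSet (insert e P) = {v | v ∈ e} ∪ VSet P := by
  ext v
  simp [VSet]

lemma IsMatching.subset {M M' : Finset (Edge n)} (hM : IsMatching M) (h : M' ⊆ M) :
    IsMatching M' :=
  ⟨fun e he => hM.1 e (h he), fun e he f hf hef v hv => hM.2 e (h he) f (h hf) hef v hv⟩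

lemma IsMatching.eq_of_mem {M : Finset (Edge n)} (hM : IsMatching M) {e e' : Edge n}
    (he : e ∈ M) (he' : e' ∈ M) {v : Fin n} (hv : v ∈ e) (hv' : v ∈ e') : e = e' := by
  by_contra h
  exact hM.2 e he e' he' h v hv hv'

lemma IsMatching.ncard_VSet_inter {P : Finset (Edge n)} (hP : IsMatching P) {S : Set (Fin n)}
    {c : ℕ} (hS : ∀ e ∈ P, ({v | v ∈ e} ∩ S).ncard = c) :
    (VSet P ∩ S).ncard = c * P.card := by
  induction P using Finset.induction_on with
  | empty => simp [VSet]
  | insert e P he ih =>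
    have hdisj : Disjoint {v | v ∈ e} (VSet P) := by
      rw [Set.disjoint_left]
      rintro v hv ⟨e', he', hv'⟩
      exact hP.2 e (Finset.mem_insert_self e P) e' (Finset.mem_insert_of_mem he')
        (fun h => he (h ▸ he')) v hv hv'
    rw [VSet_insert, Set.union_inter_distrib_right,
      Set.ncard_union_eq (hdisj.mono Set.inter_subset_left Set.inter_subset_left),
      hS e (Finset.mem_insert_self e P),
      ih (hP.subset (Finset.subset_insert e P)) fun e' he' => hS e' (Finset.mem_insert_of_mem he'),
      Finset.card_insert_of_notMem he]
    ring

lemma IsMatching.ncard_VSet {P : Finset (Edge n)} (hP : IsMatching P) :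
    (VSet P).ncard = 2 * P.card := by
  have key := hP.ncard_VSet_inter (S := Set.univ) (c := 2) fun e he => by
    induction e using Sym2.ind with
    | _ a b =>
      have hab : a ≠ b := fun h => hP.1 _ he (Sym2.mk_isDiag_iff.2 h)
      rw [Set.inter_univ, show {v | v ∈ s(a, b)} = {a, b} by ext; simp]
      exact Set.ncard_pair hab
  rwa [Set.inter_univ] at key

def IsPMOn (s : Set (Fin n)) (P : Finset (Edge n)) : Prop :=
  IsMatching P ∧ VSet P = s

lemma IsPMOn.mem_of_mem {s : Set (Fin n)} {P : Finset (Edge n)} (hP : IsPMOn s P) {e : Edge n}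
    (he : e ∈ P) {v : Fin n} (hv : v ∈ e) : v ∈ s :=
  hP.2 ▸ ⟨e, he, hv⟩

lemma IsPMOn.isPM {P : Finset (Edge n)} (hP : IsPMOn Set.univ P) : IsPM P :=
  ⟨hP.1, fun v => (hP.2.symm ▸ Set.mem_univ v : v ∈ VSet P)⟩

lemma IsPMOn.disjoint {s t : Set (Fin n)} {P Q : Finset (Edge n)} (hP : IsPMOn s P)
    (hQ : IsPMOn t Q) (hst : Disjoint s t) : Disjoint P Q := by
  rw [Finset.disjoint_left]
  intro e heP heQ
  induction e using Sym2.ind with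
  | _ a b =>
    exact Set.disjoint_left.1 hst (hP.mem_of_mem heP (Sym2.mem_mk_left a b))
      (hQ.mem_of_mem heQ (Sym2.mem_mk_left a b))

lemma IsPMOn.union {s t : Set (Fin n)} {P Q : Finset (Edge n)} (hP : IsPMOn s P)
    (hQ : IsPMOn t Q) (hst : Disjoint s t) : IsPMOn (s ∪ t) (P ∪ Q) := by
  have hcross : ∀ e ∈ P, ∀ e' ∈ Q, ∀ v ∈ e, v ∉ e' := fun e he e' he' v hv hv' =>
    Set.disjoint_left.1 hst (hP.mem_of_mem he hv) (hQ.mem_of_mem he' hv')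
  refine ⟨⟨fun e he => ?_, fun e he e' he' hne v hv hv' => ?_⟩, by rw [VSet_union, hP.2, hQ.2]⟩
  · rcases Finset.mem_union.1 he with h | h
    exacts [hP.1.1 e h, hQ.1.1 e h]
  · rcases Finset.mem_union.1 he with h | h <;> rcases Finset.mem_union.1 he' with h' | h'
    exacts [hP.1.2 e h e' h' hne v hv hv', hcross e h e' h' v hv hv',
      hcross e' h' e h v hv' hv, hQ.1.2 e h e' h' hne v hv hv']

lemma isPMOn_pair {a b : Fin n} (hab : a ≠ b) : IsPMOn {a, b} {s(a, b)} := by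
  refine ⟨⟨?_, ?_⟩, ?_⟩
  · simpa using hab
  · simp
  · ext v
    simp [VSet]

lemma IsPMOn.insert_edge {s : Set (Fin n)} {P : Finset (Edge n)} (hP : IsPMOn s P) {a b : Fin n}
    (hab : a ≠ b) (hs : Disjoint {a, b} s) : IsPMOn ({a, b} ∪ s) (insert s(a, b) P) :=
  Finset.insert_eq s(a, b) P ▸ (isPMOn_pair hab).union hP hs

lemma exists_isPMOn {s : Set (Fin n)} (hs : Even s.ncard) : ∃ P, IsPMOn s P := by
  obtain ⟨j, hj⟩ := hs
  induction j generalizing s with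
  | zero => exact ⟨∅, by simp [IsMatching], by simp [VSet, (Set.ncard_eq_zero (s := s)).1 hj]⟩
  | succ j ih =>
    obtain ⟨a, ha⟩ := Set.nonempty_of_ncard_ne_zero (s := s) (by omega)
    obtain ⟨b, hb⟩ := Set.nonempty_of_ncard_ne_zero (s := s \ {a})
      (by rw [Set.ncard_sdiff_singleton_of_mem ha]; omega)
    have hab : a ≠ b := fun h => hb.2 h.symm
    have hsub : {a, b} ⊆ s := Set.insert_subset ha (Set.singleton_subset_iff.2 hb.1)
    obtain ⟨P, hP⟩ := ih (s := s \ {a, b}) (by rw [Set.ncard_sdiff hsub, Set.ncard_pair hab]; omega)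
    exact ⟨_, Set.union_sdiff_cancel hsub ▸ hP.insert_edge hab Set.disjoint_sdiff_right⟩

lemma IsPMOn.filter_cutSet_eq_empty {s U : Set (Fin n)} {P : Finset (Edge n)} (hP : IsPMOn s P)
    (h : s ⊆ U ∨ s ⊆ Uᶜ) : P.filter (· ∈ cutSet U) = ∅ := by
  refine Finset.filter_eq_empty_iff.2 fun e he => notMem_cutSet fun v hv w hw hvU => ?_
  rcases h with h | h
  exacts [h (hP.mem_of_mem he hw), absurd hvU (h (hP.mem_of_mem he hv))]

lemma exists_isPMOn_filter_cutSet_eq_empty {s U : Set (Fin n)} (hin : Even (s ∩ U).ncard)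
    (hout : Even (s \ U).ncard) : ∃ P, IsPMOn s P ∧ P.filter (· ∈ cutSet U) = ∅ := by
  obtain ⟨P, hP⟩ := exists_isPMOn hin
  obtain ⟨Q, hQ⟩ := exists_isPMOn hout
  refine ⟨P ∪ Q, Set.inter_union_sdiff s U ▸ hP.union hQ Set.disjoint_sdiff_inter.symm, ?_⟩
  rw [Finset.filter_union, hP.filter_cutSet_eq_empty (Or.inl Set.inter_subset_right),
    hQ.filter_cutSet_eq_empty (Or.inr fun v hv => hv.2), Finset.empty_union]

lemma exists_isPMOn_card_filter_cutSet (U : Set (Fin n)) {s : Set (Fin n)} (hs : Even s.ncard) :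
    ∃ P, IsPMOn s P ∧ (P.filter (· ∈ cutSet U)).card = (s ∩ U).ncard % 2 := by
  have hparity := Nat.even_add.1 (Set.ncard_inter_add_ncard_sdiff_eq_ncard s U ▸ hs)
  rcases Nat.even_or_odd (s ∩ U).ncard with hin | hin
  · obtain ⟨P, hP, hcut⟩ := exists_isPMOn_filter_cutSet_eq_empty hin (hparity.1 hin)
    exact ⟨P, hP, by rw [hcut, Finset.card_empty, Nat.even_iff.1 hin]⟩
  · have hout : Odd (s \ U).ncard :=
      Nat.not_even_iff_odd.1 fun h => Nat.not_even_iff_odd.2 hin (hparity.2 h)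
    obtain ⟨a, ha⟩ := Set.nonempty_of_ncard_ne_zero hin.pos.ne'
    obtain ⟨b, hb⟩ := Set.nonempty_of_ncard_ne_zero hout.pos.ne'
    have hab : a ≠ b := fun h => hb.2 (h ▸ ha.2)
    have hsub : {a, b} ⊆ s := Set.insert_subset ha.1 (Set.singleton_subset_iff.2 hb.1)
    have hin' : (s \ {a, b}) ∩ U = (s ∩ U) \ {a} := by
      ext v; constructor
      · rintro ⟨⟨hv, hvab⟩, hvU⟩
        exact ⟨⟨hv, hvU⟩, fun h => hvab (Or.inl h)⟩
      · rintro ⟨⟨hv, hvU⟩, hva⟩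
        exact ⟨⟨hv, by rintro (h | h); exacts [hva h, hb.2 (h ▸ hvU)]⟩, hvU⟩
    have hout' : (s \ {a, b}) \ U = (s \ U) \ {b} := by
      ext v; constructor
      · rintro ⟨⟨hv, hvab⟩, hvU⟩
        exact ⟨⟨hv, hvU⟩, fun h => hvab (Or.inr h)⟩
      · rintro ⟨⟨hv, hvU⟩, hvb⟩
        exact ⟨⟨hv, by rintro (h | h); exacts [hvU (h ▸ ha.2), hvb h]⟩, hvU⟩
    obtain ⟨P, hP, hcut⟩ := exists_isPMOn_filter_cutSet_eq_empty (s := s \ {a, b}) (U := U)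
      (by rw [hin', Set.ncard_sdiff_singleton_of_mem ha]; exact Nat.Odd.sub_odd hin odd_one)
      (by rw [hout', Set.ncard_sdiff_singleton_of_mem hb]; exact Nat.Odd.sub_odd hout odd_one)
    refine ⟨_, Set.union_sdiff_cancel hsub ▸ hP.insert_edge hab Set.disjoint_sdiff_right, ?_⟩
    rw [Finset.filter_insert, if_pos (mem_cutSet_iff.2 (Or.inl ⟨ha.2, hb.2⟩)), hcut,
      Nat.odd_iff.1 hin]
    rfl

lemma Qset_one_nonempty {t : ℕ} (hn : Even n) (ht : Odd t) (htn : t ≤ n) :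
    (Qset n t 1).Nonempty := by
  obtain ⟨U, -, hU⟩ := Finset.exists_subset_card_eq (s := (Finset.univ : Finset (Fin n)))
    (by simpa using htn)
  obtain ⟨M, hM, hcut⟩ := exists_isPMOn_card_filter_cutSet (U : Set (Fin n)) (s := Set.univ)
    (by simpa using hn)
  refine ⟨(U, M), hU, hM.isPM, ?_⟩
  rw [ncard_coe_inter_cutSet, hcut, Set.univ_inter, Set.ncard_coe_finset, hU, Nat.odd_iff.1 ht]

lemma inter_Qset_eq_empty_of_mu_eq_zero {t ℓ : ℕ} {R : Set (Finset (Fin n) × Finset (Edge n))}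
    (hQ : (Qset n t ℓ).Nonempty) (h : mu n t ℓ R = 0) : R ∩ Qset n t ℓ = ∅ := by
  rw [mu, div_eq_zero_iff, Nat.cast_eq_zero, Nat.cast_eq_zero, Set.ncard_eq_zero,
    Set.ncard_eq_zero] at h
  exact h.resolve_right hQ.ne_empty

lemma even_npar {k : ℕ} (hk : Odd k) (m : ℕ) : Even (npar k m) :=
  ((Nat.Odd.sub_odd hk (by decide)).mul_left _).add (even_two_mul k)

lemma odd_tpar {k : ℕ} (hk : Odd k) (m : ℕ) : Odd (tpar k m) :=
  ((Nat.Odd.sub_odd hk (by decide)).mul_left _).add_odd (by decide)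

lemma tpar_le_npar {k : ℕ} (hk : 2 ≤ k) (m : ℕ) : tpar k m ≤ npar k m := by
  unfold tpar npar
  have : (m + 1) / 2 ≤ 3 * m := by omega
  have := Nat.mul_le_mul_right (k - 3) this
  omega

/-- Each member of `G` is one of the three pairs of a fixed member `H₀` plus a point of `F`. -/
lemma card_le_three_mul_of_two_le_card_inter {α : Type*} [DecidableEq α] {F : Finset α}
    {G : Finset (Finset α)} (hG : G ⊆ F.powersetCard 3)
    (hinter : ∀ H₁ ∈ G, ∀ H₂ ∈ G, 2 ≤ (H₁ ∩ H₂).card) : G.card ≤ 3 * F.card := by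
  rcases G.eq_empty_or_nonempty with rfl | ⟨H₀, hH₀⟩
  · simp
  have hcover : G ⊆ (H₀.powersetCard 2).biUnion fun π => F.image fun x => insert x π := by
    intro H hH
    obtain ⟨hHF, hH3⟩ := Finset.mem_powersetCard.1 (hG hH)
    obtain ⟨π, hπ, hπ2⟩ := Finset.exists_subset_card_eq (hinter H₀ hH₀ H hH)
    have hπH : π ⊆ H := hπ.trans Finset.inter_subset_right
    obtain ⟨x, hx⟩ := Finset.card_eq_one.1
      (by rw [Finset.card_sdiff_of_subset hπH, hH3, hπ2] : (H \ π).card = 1)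
    simp only [Finset.mem_biUnion, Finset.mem_image, Finset.mem_powersetCard]
    refine ⟨π, ⟨hπ.trans Finset.inter_subset_left, hπ2⟩, x,
      hHF (Finset.sdiff_subset (hx ▸ Finset.mem_singleton_self x)), ?_⟩
    rw [← Finset.singleton_union, ← hx, Finset.sdiff_union_of_subset hπH]
  calc G.card ≤ _ := Finset.card_le_card hcover
    _ ≤ ∑ π ∈ H₀.powersetCard 2, (F.image fun x => insert x π).card := Finset.card_biUnion_le
    _ ≤ ∑ π ∈ H₀.powersetCard 2, F.card := Finset.sum_le_sum fun _ _ => Finset.card_image_le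
    _ = 3 * F.card := by
      rw [Finset.sum_const, Finset.card_powersetCard, (Finset.mem_powersetCard.1 (hG hH₀)).2]
      rfl

lemma three_mul_div_choose_three_le {k : ℕ} (hk : 3 ≤ k) :
    (3 * k : ℝ) / k.choose 3 ≤ 100 / (k : ℝ) ^ 2 := by
  obtain ⟨j, rfl⟩ := Nat.exists_eq_add_of_le' hk
  have hchoose : (6 * (j + 3).choose 3 : ℝ) = (j + 3) * (j + 2) * (j + 1) := by
    have h := Nat.descFactorial_eq_factorial_mul_choose (j + 3) 3
    simp only [Nat.descFactorial_succ, Nat.descFactorial_zero, Nat.factorial,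
      show j + 3 - 2 = j + 1 by omega, show j + 3 - 1 = j + 2 by omega, Nat.sub_zero] at h
    exact_mod_cast (by linarith : 6 * (j + 3).choose 3 = (j + 3) * (j + 2) * (j + 1))
  have hpos : (0 : ℝ) < (j + 3).choose 3 := Nat.cast_pos.2 (Nat.choose_pos (by omega))
  rw [div_le_div_iff₀ hpos (by positivity)]
  push_cast
  nlinarith [(Nat.cast_nonneg j : (0 : ℝ) ≤ j)]

lemma nonempty_of_ncard_div_ne_zero {α : Type*} {S : Set α} {d : ℝ}
    (h : (S.ncard : ℝ) / d ≠ 0) : S.Nonempty := by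
  rw [Set.nonempty_iff_ne_empty]
  rintro rfl
  simp at h

section Partition

variable {m : ℕ} {f : Fin n → Lbl m}

lemma IsPartition.ncard_setOf_inCD {k : ℕ} (hf : IsPartition n k m f) :
    {v | inCD f v}.ncard = 2 * k := by
  have hdisj : Disjoint {v | f v = Lbl.C} {v | f v = Lbl.D} :=
    Set.disjoint_left.2 fun v (h : f v = Lbl.C) (h' : f v = Lbl.D) => by simp [h] at h'
  rw [show {v | inCD f v} = {v | f v = Lbl.C} ∪ {v | f v = Lbl.D} from rfl,
    Set.ncard_union_eq hdisj, hf.2.1, hf.2.2.1, two_mul]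

lemma VSet_subset_setOf_inCD {H : Finset (Edge n)} (hH : ∀ e ∈ H, betweenCD f e) :
    VSet H ⊆ {v | inCD f v} := by
  rintro v ⟨e, he, hv⟩
  obtain ⟨a, b, rfl, ha, hb⟩ := hH e he
  rcases Sym2.mem_iff.1 hv with rfl | rfl
  exacts [Or.inl ha, Or.inr hb]

lemma IsMatching.ncard_VSet_inter_Cset {P : Finset (Edge n)} (hP : IsMatching P)
    (hPCD : ∀ e ∈ P, betweenCD f e) : (VSet P ∩ Cset f).ncard = P.card := by
  rw [hP.ncard_VSet_inter (c := 1) fun e he => ?_, one_mul]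
  obtain ⟨a, b, rfl, ha, hb⟩ := hPCD e he
  have : {v | v ∈ s(a, b)} ∩ Cset f = {a} := by
    ext v
    simp only [Set.mem_inter_iff, Set.mem_ofPred_eq, Sym2.mem_iff, Set.mem_singleton_iff, Cset]
    constructor
    · rintro ⟨rfl | rfl, hv⟩
      · rfl
      · simp [hv] at hb
    · rintro rfl
      exact ⟨Or.inl rfl, ha⟩
  rw [this, Set.ncard_singleton]

lemma inter_setOf_inCD_of_mem_UallT {t : ℕ} {U : Finset (Fin n)} (hU : U ∈ UallT t f) :
    (U : Set (Fin n)) ∩ {v | inCD f v} = (U : Set (Fin n)) ∩ Cset f := by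
  ext v
  refine ⟨fun ⟨hvU, hv⟩ => ⟨hvU, ?_⟩, fun ⟨hvU, hv⟩ => ⟨hvU, Or.inl hv⟩⟩
  rcases hU.2.1 v hvU with ⟨i, hi⟩ | hC
  · rcases hv with h | h <;> simp [hi] at h
  · exact hC

lemma allowedEdge_mk {a b : Fin n} (h : allowedEdge f s(a, b)) :
    (∃ i, f a = Lbl.A i ∧ f b = Lbl.A i) ∨ (inCD f a ∧ inCD f b) ∨
      (∃ i, f a = Lbl.B i ∧ f b = Lbl.B i) := by
  obtain ⟨x, y, hxy, hP⟩ := h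
  rcases Sym2.eq_iff.mp hxy with ⟨rfl, rfl⟩ | ⟨rfl, rfl⟩
  · exact hP
  · rcases hP with ⟨i, h1, h2⟩ | ⟨h1, h2⟩ | ⟨i, h1, h2⟩
    exacts [Or.inl ⟨i, h2, h1⟩, Or.inr (Or.inl ⟨h2, h1⟩), Or.inr (Or.inr ⟨i, h2, h1⟩)]

lemma inter_cutSet_eq_filter {t : ℕ} {U : Finset (Fin n)} {M F : Finset (Edge n)}
    (hU : U ∈ UallT t f) (hM : M ∈ MallT f) (hFM : F ⊆ M) (hF : {v | inCD f v} ⊆ VSet F) :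
    (M : Set (Edge n)) ∩ cutSet U = ↑(F.filter (· ∈ cutSet U)) := by
  ext e
  rw [Finset.coe_filter, Set.mem_inter_iff, Set.mem_ofPred_eq, Finset.mem_coe]
  refine ⟨fun ⟨heM, hcut⟩ => ⟨?_, hcut⟩, fun ⟨heF, hcut⟩ => ⟨hFM heF, hcut⟩⟩
  obtain ⟨a, b, rfl, haU, hbU⟩ := hcut
  rcases allowedEdge_mk (hM.2 _ heM) with ⟨i, ha, hb⟩ | ⟨ha, -⟩ | ⟨i, ha, -⟩
  · rcases hU.2.2 i with hdisj | hsub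
    · exact absurd ha (Set.disjoint_left.1 hdisj haU)
    · exact absurd (hsub hb) hbU
  · obtain ⟨e', he', hae'⟩ := hF ha
    rwa [hM.1.1.eq_of_mem heM (hFM he') (Sym2.mem_mk_left a b) hae']
  · rcases hU.2.1 a haU with ⟨i', h⟩ | h <;> simp [h] at ha

lemma mem_cutSet_iff_mem_of_subset {F H : Finset (Edge n)} (hF : IsMatching F)
    (hFCD : ∀ e ∈ F, betweenCD f e) (hHF : H ⊆ F) {U : Set (Fin n)}
    (hU : U ∩ {v | inCD f v} = VSet H ∩ Cset f) {e : Edge n} (he : e ∈ F) :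
    e ∈ cutSet U ↔ e ∈ H := by
  obtain ⟨a, b, rfl, ha, hb⟩ := hFCD e he
  have hbU : b ∉ U := fun h => by
    have hbC : f b = Lbl.C := (hU.subset ⟨h, Or.inr hb⟩).2
    simp [hb] at hbC
  have haU : a ∈ U ↔ s(a, b) ∈ H := by
    refine ⟨fun h => ?_, fun h => (hU.symm.subset ⟨⟨_, h, Sym2.mem_mk_left a b⟩, ha⟩).1⟩
    obtain ⟨⟨e', he', hae'⟩, -⟩ := hU.subset ⟨h, Or.inl ha⟩
    rwa [hF.eq_of_mem he (hHF he') (Sym2.mem_mk_left a b) hae']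
  rw [mem_cutSet_iff]
  tauto

lemma exists_isPMOn_superset_card_filter_cutSet_eq_one {F H₁ H₂ : Finset (Edge n)}
    {U : Set (Fin n)} (hCD : Even {v | inCD f v}.ncard) (hF : IsMatching F)
    (hFCD : ∀ e ∈ F, betweenCD f e) (h₁F : H₁ ⊆ F) (h₂F : H₂ ⊆ F) (h₁ : Odd H₁.card)
    (h₁₂ : (H₁ ∩ H₂).card ≤ 1) (hU : U ∩ {v | inCD f v} = VSet H₁ ∩ Cset f) :
    ∃ F', IsPMOn {v | inCD f v} F' ∧ H₂ ⊆ F' ∧ (F'.filter (· ∈ cutSet U)).card = 1 := by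
  have hV₂ := VSet_subset_setOf_inCD fun e he => hFCD e (h₂F he)
  have hH₂ : IsPMOn (VSet H₂) H₂ := ⟨hF.subset h₂F, rfl⟩
  obtain ⟨P, hP, hPcut⟩ := exists_isPMOn_card_filter_cutSet U (s := {v | inCD f v} \ VSet H₂)
    (by rw [Set.ncard_sdiff hV₂, hH₂.1.ncard_VSet]; exact hCD.tsub (even_two_mul _))
  have hsU : ({v | inCD f v} \ VSet H₂) ∩ U = VSet (H₁ \ H₂) ∩ Cset f := by
    ext v
    constructor
    · rintro ⟨⟨hv, hv₂⟩, hvU⟩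
      obtain ⟨⟨e, he, hve⟩, hvC⟩ := hU.subset ⟨hvU, hv⟩
      exact ⟨⟨e, Finset.mem_sdiff.2 ⟨he, fun h => hv₂ ⟨e, h, hve⟩⟩, hve⟩, hvC⟩
    · rintro ⟨⟨e, he, hve⟩, hvC⟩
      obtain ⟨he₁, he₂⟩ := Finset.mem_sdiff.1 he
      refine ⟨⟨Or.inl hvC, fun ⟨e', he', hve'⟩ => he₂ ?_⟩,
        (hU.symm.subset ⟨⟨e, he₁, hve⟩, hvC⟩).1⟩
      rwa [hF.eq_of_mem (h₁F he₁) (h₂F he') hve hve']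
  have hH₂cut : H₂.filter (· ∈ cutSet U) = H₂ ∩ H₁ := by
    ext e
    rw [Finset.mem_filter, Finset.mem_inter]
    exact and_congr_right fun he => mem_cutSet_iff_mem_of_subset hF hFCD h₁F hU (h₂F he)
  refine ⟨H₂ ∪ P, Set.union_sdiff_cancel hV₂ ▸ hH₂.union hP Set.disjoint_sdiff_right,
    Finset.subset_union_left, ?_⟩
  rw [Finset.filter_union, Finset.card_union_of_disjoint
      (Finset.disjoint_filter_filter (hH₂.disjoint hP Set.disjoint_sdiff_right)),
    hH₂cut, hPcut, hsU, (hF.subset (Finset.sdiff_subset.trans h₁F)).ncard_VSet_inter_Cset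
      fun e he => hFCD e (h₁F (Finset.mem_sdiff.1 he).1), Finset.inter_comm]
  have := Finset.card_inter_add_card_sdiff H₁ H₂
  have := Nat.odd_iff.1 h₁
  omega

lemma two_le_card_inter_of_good {k t : ℕ} {ε : ℝ} {Uu : Set (Finset (Fin n))}
    {Mm : Set (Finset (Edge n))} (hR : Uu ×ˢ Mm ∩ Qset n t 1 = ∅)
    (hCD : {v | inCD f v}.ncard = 2 * k) {F H₁ H₂ : Finset (Edge n)} (hF : IsMatching F)
    (hFCD : ∀ e ∈ F, betweenCD f e) (h₁F : H₁ ⊆ F) (h₂F : H₂ ⊆ F) (h₁ : Odd H₁.card)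
    (hg₁ : UGood ε t f Uu H₁) (hg₂ : MGood ε k f Mm H₂) : 2 ≤ (H₁ ∩ H₂).card := by
  by_contra! h₁₂
  obtain ⟨U, hU, hUC, hUu⟩ := nonempty_of_ncard_div_ne_zero (right_ne_zero_of_mul hg₁.1.ne')
  obtain ⟨F', hF', h₂F', hcut⟩ := exists_isPMOn_superset_card_filter_cutSet_eq_one
    (hCD ▸ even_two_mul k) hF hFCD h₁F h₂F h₁ (by omega)
    ((inter_setOf_inCD_of_mem_UallT hU).trans hUC)
  have hF'card : F'.card = k := by
    have := hF'.1.ncard_VSet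
    rw [hF'.2, hCD] at this
    omega
  have hF'CD : ∀ e ∈ F', insideCD f e := fun e he => by
    induction e using Sym2.ind with
    | _ a b =>
      exact ⟨a, b, rfl, hF'.mem_of_mem he (Sym2.mem_mk_left a b),
        hF'.mem_of_mem he (Sym2.mem_mk_right a b)⟩
  obtain ⟨M, hM, hF'M, hMm⟩ := nonempty_of_ncard_div_ne_zero
    (hg₂.1.trans_le (hg₂.2 F' hF'.1 hF'card h₂F' hF'CD).1).ne'
  refine Set.eq_empty_iff_forall_notMem.1 hR (U, M) ⟨⟨hUu, hMm⟩, hU.1, hM.1, ?_⟩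
  rw [inter_cutSet_eq_filter hU hM hF'M hF'.2.symm.subset, Set.ncard_coe_finset, hcut]

end Partition

theorem frac_good_3subsets_le_general (k m : ℕ) (hk : Odd k) (hk3 : 3 ≤ k)
    (ε : ℝ)
    (Uu : Set (Finset (Fin (npar k m)))) (Mm : Set (Finset (Edge (npar k m))))
    (hmu1 : mu (npar k m) (tpar k m) 1 (Uu ×ˢ Mm) = 0)
    (f : Fin (npar k m) → Lbl m) (hf : IsPartition (npar k m) k m f)
    (F : Finset (Edge (npar k m))) (hF : IsCDMatching f k F) :
    ({H | H ⊆ F ∧ H.card = 3 ∧ Good ε k (tpar k m) f Mm Uu H}.ncard : ℝ) /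
        ({H : Finset (Edge (npar k m)) | H ⊆ F ∧ H.card = 3}.ncard : ℝ) ≤
      100 / (k : ℝ) ^ 2 := by
  have hR := inter_Qset_eq_empty_of_mu_eq_zero
    (Qset_one_nonempty (even_npar hk m) (odd_tpar hk m) (tpar_le_npar (by omega) m)) hmu1
  set G := (F.powersetCard 3).filter (Good ε k (tpar k m) f Mm Uu)
  have hG : G.card ≤ 3 * F.card := card_le_three_mul_of_two_le_card_inter (G := G)
    (Finset.filter_subset _ _) fun H₁ h₁ H₂ h₂ => by
      obtain ⟨h₁F, h₁3⟩ := Finset.mem_powersetCard.1 (Finset.mem_filter.1 h₁).1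
      exact two_le_card_inter_of_good hR hf.ncard_setOf_inCD hF.1 hF.2.2 h₁F
        (Finset.mem_powersetCard.1 (Finset.mem_filter.1 h₂).1).1 (h₁3 ▸ by decide)
        (Finset.mem_filter.1 h₁).2.2 (Finset.mem_filter.1 h₂).2.1
  have hnum : {H | H ⊆ F ∧ H.card = 3 ∧ Good ε k (tpar k m) f Mm Uu H} = (G : Set _) := by
    ext H
    simp [G, and_assoc]
  have hden : {H : Finset (Edge (npar k m)) | H ⊆ F ∧ H.card = 3} = (F.powersetCard 3 : Set _) := by
    ext H
    simp
  rw [hnum, hden, Set.ncard_coe_finset, Set.ncard_coe_finset, Finset.card_powersetCard, hF.2.1]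
  calc (G.card : ℝ) / k.choose 3 ≤ (3 * k : ℝ) / k.choose 3 := by gcongr; exact_mod_cast hF.2.1 ▸ hG
    _ ≤ 100 / (k : ℝ) ^ 2 := three_mul_div_choose_three_le hk3

/-- For any rectangle `𝓡 = 𝓤 × 𝓜` with `μ₁(𝓡) = 0`, any partition `T` and any `k`-matching
`F ⊆ C × D`, the fraction of 3-element subsets `H ⊆ F` with `(T,H)` good is at most `100/k²`. -/
theorem frac_good_3subsets_le (k m : ℕ) (hk : Odd k) (hk3 : 3 ≤ k) (hm : Odd m)
    (ε : ℝ) (hε : 0 < ε)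
    (Uu : Set (Finset (Fin (npar k m)))) (Mm : Set (Finset (Edge (npar k m))))
    (hUu : ∀ U ∈ Uu, U.card = tpar k m) (hMm : ∀ M ∈ Mm, IsPM M)
    (hmu1 : mu (npar k m) (tpar k m) 1 (Uu ×ˢ Mm) = 0)
    (f : Fin (npar k m) → Lbl m) (hf : IsPartition (npar k m) k m f)
    (F : Finset (Edge (npar k m))) (hF : IsCDMatching f k F) :
    ({H | H ⊆ F ∧ H.card = 3 ∧ Good ε k (tpar k m) f Mm Uu H}.ncard : ℝ) /
        ({H : Finset (Edge (npar k m)) | H ⊆ F ∧ H.card = 3}.ncard : ℝ) ≤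
      100 / (k : ℝ) ^ 2 :=
  frac_good_3subsets_le_general k m hk hk3 ε Uu Mm hmu1 f hf F hF

end MatchingLB
end

section
/- For all ε > 0 and q ∈ ℕ there is a constant δ = δ(ε,q) > 0 so that the following holds: take finite sets X_1,…,X_m with 1 ≤ |X_i| ≤ q for all i and set X := X_1 × … × X_m; let Y ⊆ X with |Y| ≥ 2^{−δ·m}·|X|. Call an index i ∈ [m] ε-unbiased if (1/(1+ε))·(1/|X_i|) ≤ Pr_{y ∼ uniform on Y}[y_i = j] ≤ (1+ε)·(1/|X_i|) for all j ∈ X_i. Then the number of indices that are not ε-unbiased is at most ε·m. -/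
/-!
For a uniformly random `y ∈ Y`, subadditivity of entropy gives `log |Y| ≤ ∑ᵢ H(yᵢ)`. The
deficit of a coordinate is a Kullback–Leibler divergence from the uniform law,
`log |Xᵢ| - H(yᵢ) = |Xᵢ|⁻¹ ∑ⱼ klFun (|Xᵢ| Pr[yᵢ = j])`, so it is nonnegative, and at least
`c / q` with `c = biasGap ε > 0` when `i` is biased, since `klFun`
decreases on `[0, 1]`, increases on `[1, ∞)` and vanishes only at `1`. Hence the number of biased
indices is at most `q (log |X| - log |Y|) / c ≤ q δ m log 2 / c`, which is `≤ ε m` for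
`δ = ε c / ((q + 1) log 2)`.
-/

/-- An index `i` is `ε`-unbiased for a set `Y` of tuples if for every value `j ∈ X_i` the
probability that a uniform `y ∈ Y` has `y_i = j` is within a `(1+ε)` factor of `1/|X_i|`. -/
def Unbiased {m : ℕ} {X : Fin m → Type*} (ε : ℝ) (Y : Set (∀ i, X i)) (i : Fin m) : Prop :=
  ∀ j : X i,
    (1 / (1 + ε)) * (1 / (Nat.card (X i) : ℝ)) ≤
        ({y ∈ Y | y i = j}.ncard : ℝ) / (Y.ncard : ℝ) ∧
      ({y ∈ Y | y i = j}.ncard : ℝ) / (Y.ncard : ℝ) ≤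
        (1 + ε) * (1 / (Nat.card (X i) : ℝ))

open Finset Real InformationTheory

lemma klFun_pos {x : ℝ} (hx : 0 ≤ x) (hx1 : x ≠ 1) : 0 < klFun x :=
  (klFun_nonneg hx).lt_of_ne (Ne.symm fun h => hx1 ((klFun_eq_zero_iff hx).1 h))

lemma monotoneOn_klFun : MonotoneOn klFun (Set.Ici 1) := by
  refine monotoneOn_of_deriv_nonneg (convex_Ici 1) continuous_klFun.continuousOn
    (fun x hx => ?_) fun x hx => ?_
  · rw [interior_Ici] at hx
    exact (hasDerivAt_klFun (zero_lt_one.trans hx).ne').differentiableAt.differentiableWithinAt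
  · rw [interior_Ici] at hx
    simpa using Real.log_nonneg hx.le

lemma antitoneOn_klFun : AntitoneOn klFun (Set.Icc 0 1) := by
  refine antitoneOn_of_deriv_nonpos (convex_Icc 0 1) continuous_klFun.continuousOn
    (fun x hx => ?_) fun x hx => ?_
  · rw [interior_Icc] at hx
    exact (hasDerivAt_klFun hx.1.ne').differentiableAt.differentiableWithinAt
  · rw [interior_Icc] at hx
    simpa using Real.log_nonpos hx.1.le hx.2.le

noncomputable def biasGap (ε : ℝ) : ℝ := min (klFun (1 + ε)) (klFun (1 + ε)⁻¹)

lemma biasGap_pos {ε : ℝ} (hε : 0 < ε) : 0 < biasGap ε :=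
  lt_min (klFun_pos (by linarith) (by linarith))
    (klFun_pos (by positivity) (inv_ne_one.2 (by linarith)))

lemma biasGap_le_klFun_of_notMem_Ioo {ε x : ℝ} (hε : 0 < ε) (hx : 0 ≤ x)
    (hbias : x ∉ Set.Ioo (1 + ε)⁻¹ (1 + ε)) : biasGap ε ≤ klFun x := by
  unfold biasGap
  have hinv : (1 + ε)⁻¹ ≤ 1 := inv_le_one_of_one_le₀ (by linarith)
  rcases le_or_gt x (1 + ε)⁻¹ with hlow | hhigh
  · exact (min_le_right _ _).trans
      (antitoneOn_klFun ⟨hx, hlow.trans hinv⟩ ⟨by positivity, hinv⟩ hlow)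
  · have hup : 1 + ε ≤ x := not_lt.1 fun h => hbias ⟨hhigh, h⟩
    exact (min_le_left _ _).trans
      (monotoneOn_klFun (Set.mem_Ici.2 (by linarith)) (Set.mem_Ici.2 (by linarith)) hup)

section Entropy

variable {α : Type*} [Fintype α] {p : α → ℝ}

lemma log_card_sub_sum_negMulLog (hp : ∀ j, 0 ≤ p j) (hsum : ∑ j, p j = 1) :
    log (Fintype.card α) - ∑ j, negMulLog (p j) =
      (Fintype.card α : ℝ)⁻¹ * ∑ j, klFun (Fintype.card α * p j) := by
  obtain ⟨j₀, -, -⟩ := Finset.exists_ne_zero_of_sum_ne_zero (hsum.trans_ne one_ne_zero)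
  have hn : (0 : ℝ) < Fintype.card α := by
    have : Nonempty α := ⟨j₀⟩
    exact_mod_cast Fintype.card_pos
  have hterm : ∀ j, (Fintype.card α : ℝ)⁻¹ * klFun (Fintype.card α * p j) =
      p j * log (Fintype.card α) - negMulLog (p j) + ((Fintype.card α : ℝ)⁻¹ - p j) := by
    intro j
    rcases (hp j).eq_or_lt with h | h
    · simp [klFun, ← h]
    · rw [klFun, negMulLog, Real.log_mul hn.ne' h.ne']
      field_simp
      ring
  rw [mul_sum, sum_congr rfl fun j _ => hterm j, sum_add_distrib, sum_sub_distrib,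
    sum_sub_distrib, ← sum_mul, hsum, sum_const, card_univ, nsmul_eq_mul,
    mul_inv_cancel₀ hn.ne']
  ring

lemma sum_negMulLog_le_log_card (hp : ∀ j, 0 ≤ p j) (hsum : ∑ j, p j = 1) :
    ∑ j, negMulLog (p j) ≤ log (Fintype.card α) := by
  have hdecomp := log_card_sub_sum_negMulLog hp hsum
  have hkl : 0 ≤ (Fintype.card α : ℝ)⁻¹ * ∑ j, klFun (Fintype.card α * p j) :=
    mul_nonneg (by positivity)
      (sum_nonneg fun j _ => klFun_nonneg (mul_nonneg (Nat.cast_nonneg _) (hp j)))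
  linarith

lemma sum_negMulLog_le_log_card_sub_of_notMem_Ioo {ε : ℝ} (hε : 0 < ε) (hp : ∀ j, 0 ≤ p j)
    (hsum : ∑ j, p j = 1) {j₀ : α} (hbias : Fintype.card α * p j₀ ∉ Set.Ioo (1 + ε)⁻¹ (1 + ε)) :
    ∑ j, negMulLog (p j) ≤
      log (Fintype.card α) - biasGap ε / Fintype.card α := by
  have hdecomp := log_card_sub_sum_negMulLog hp hsum
  have hj₀ : biasGap ε ≤ ∑ j, klFun (Fintype.card α * p j) :=
    (biasGap_le_klFun_of_notMem_Ioo hε (mul_nonneg (Nat.cast_nonneg _) (hp j₀)) hbias).trans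
      (single_le_sum (f := fun j => klFun (Fintype.card α * p j))
        (fun j _ => klFun_nonneg (mul_nonneg (Nat.cast_nonneg _) (hp j))) (mem_univ j₀))
  rw [div_eq_inv_mul]
  linarith [mul_le_mul_of_nonneg_left hj₀ (inv_nonneg.2 (Nat.cast_nonneg (Fintype.card α)))]

end Entropy

/-- Gibbs' inequality, comparing the uniform distribution on `s` with the weights `r`. -/
lemma card_mul_log_card_le_neg_sum_log {β : Type*} {s : Finset β} {r : β → ℝ}
    (hr : ∀ y ∈ s, 0 < r y) (hsum : ∑ y ∈ s, r y ≤ 1) :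
    #s * log #s ≤ -∑ y ∈ s, log (r y) := by
  rcases s.eq_empty_or_nonempty with rfl | hs
  · simp
  have hN : (0 : ℝ) < #s := by exact_mod_cast hs.card_pos
  have hpoint : ∀ y ∈ s, log #s + log (r y) ≤ #s * r y - 1 := fun y hy => by
    rw [← Real.log_mul hN.ne' (hr y hy).ne']
    exact Real.log_le_sub_one_of_pos (mul_pos hN (hr y hy))
  have := sum_le_sum hpoint
  rw [sum_add_distrib, sum_sub_distrib, ← mul_sum, sum_const, nsmul_eq_mul, sum_const,
    nsmul_eq_mul, mul_one] at this
  nlinarith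

section Marginal

variable {ι : Type*} {X : ι → Type*} [∀ i, DecidableEq (X i)]

noncomputable def marginal (Y : Finset (∀ i, X i)) (i : ι) (j : X i) : ℝ :=
  #{y ∈ Y | y i = j} / #Y

variable {Y : Finset (∀ i, X i)}

lemma marginal_nonneg (i : ι) (j : X i) : 0 ≤ marginal Y i j := by
  unfold marginal; positivity

lemma marginal_pos {y : ∀ i, X i} (hy : y ∈ Y) (i : ι) : 0 < marginal Y i (y i) :=
  div_pos (by exact_mod_cast card_pos.2 ⟨y, by simp [hy]⟩)
    (by exact_mod_cast card_pos.2 ⟨y, hy⟩)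

variable [∀ i, Fintype (X i)]

lemma sum_marginal (hY : Y.Nonempty) (i : ι) : ∑ j, marginal Y i j = 1 := by
  unfold marginal
  rw [← sum_div, div_eq_one_iff_eq (by exact_mod_cast hY.card_pos.ne'),
    ← Nat.cast_sum, card_eq_sum_card_fiberwise fun y _ => mem_univ (y i)]

lemma sum_log_marginal (i : ι) :
    ∑ y ∈ Y, log (marginal Y i (y i)) = -#Y * ∑ j, negMulLog (marginal Y i j) := by
  rw [← sum_fiberwise_of_maps_to (g := fun y => y i) fun y _ => mem_univ (y i), mul_sum]
  refine sum_congr rfl fun j _ => ?_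
  rw [sum_congr rfl fun y hy => by rw [(mem_filter.1 hy).2], sum_const, nsmul_eq_mul,
    negMulLog]
  rcases Y.eq_empty_or_nonempty with rfl | hY
  · simp
  have hN : (#Y : ℝ) ≠ 0 := by exact_mod_cast hY.card_pos.ne'
  unfold marginal
  field_simp

variable [Fintype ι] [DecidableEq ι]

lemma sum_prod_marginal_le_one (hY : Y.Nonempty) :
    ∑ y ∈ Y, ∏ i, marginal Y i (y i) ≤ 1 :=
  calc ∑ y ∈ Y, ∏ i, marginal Y i (y i)
      ≤ ∑ y : ∀ i, X i, ∏ i, marginal Y i (y i) :=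
        sum_le_sum_of_subset_of_nonneg (subset_univ Y)
          fun _ _ _ => prod_nonneg fun i _ => marginal_nonneg i _
    _ = ∏ i, ∑ j, marginal Y i j := (Fintype.prod_sum fun i j => marginal Y i j).symm
    _ = 1 := by simp [sum_marginal hY]

/-- Subadditivity of entropy, for the uniform distribution on `Y`. -/
lemma log_card_le_sum_sum_negMulLog_marginal (hY : Y.Nonempty) :
    log #Y ≤ ∑ i, ∑ j, negMulLog (marginal Y i j) := by
  have hN : (0 : ℝ) < #Y := by exact_mod_cast hY.card_pos
  have hgibbs := card_mul_log_card_le_neg_sum_log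
    (fun y hy => prod_pos fun i _ => marginal_pos hy i) (sum_prod_marginal_le_one hY)
  have hlog : ∑ y ∈ Y, log (∏ i, marginal Y i (y i)) =
      -#Y * ∑ i, ∑ j, negMulLog (marginal Y i j) := by
    rw [sum_congr rfl fun y hy => Real.log_prod fun i _ => (marginal_pos hy i).ne', sum_comm,
      mul_sum]
    exact sum_congr rfl fun i _ => sum_log_marginal i
  rw [hlog, neg_mul, neg_neg] at hgibbs
  exact le_of_mul_le_mul_left hgibbs hN

end Marginal

lemma card_mul_le_log_card_pi_sub_log_card {ι : Type*} [Fintype ι] [DecidableEq ι]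
    {X : ι → Type*} [∀ i, Fintype (X i)] [∀ i, DecidableEq (X i)] {Y : Finset (∀ i, X i)}
    (hY : Y.Nonempty) {ε : ℝ} (hε : 0 < ε) {q : ℕ} (hq : ∀ i, Fintype.card (X i) ≤ q)
    {B : Finset ι}
    (hB : ∀ i ∈ B, ∃ j, Fintype.card (X i) * marginal Y i j ∉ Set.Ioo (1 + ε)⁻¹ (1 + ε)) :
    #B * (biasGap ε / q) ≤
      log (Fintype.card (∀ i, X i)) - log #Y := by
  have hn : ∀ i, (0 : ℝ) < Fintype.card (X i) := fun i => by
    obtain ⟨y, -⟩ := hY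
    exact_mod_cast Fintype.card_pos_iff.2 ⟨y i⟩
  have hentropy : ∀ i, ∑ j, negMulLog (marginal Y i j) ≤
      log (Fintype.card (X i)) - if i ∈ B then biasGap ε / q else 0 := fun i => by
    split_ifs with hi
    · obtain ⟨j, hj⟩ := hB i hi
      have hgap : biasGap ε / q ≤ biasGap ε / Fintype.card (X i) :=
        div_le_div_of_nonneg_left (biasGap_pos hε).le (hn i) (by exact_mod_cast hq i)
      linarith [sum_negMulLog_le_log_card_sub_of_notMem_Ioo hε (marginal_nonneg i)
        (sum_marginal hY i) hj]
    · simpa using sum_negMulLog_le_log_card (marginal_nonneg i) (sum_marginal hY i)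
  have := (log_card_le_sum_sum_negMulLog_marginal hY).trans (sum_le_sum fun i _ => hentropy i)
  rw [sum_sub_distrib, ← sum_filter, filter_mem_eq_inter, univ_inter, sum_const,
    nsmul_eq_mul, ← Real.log_prod fun i _ => (hn i).ne'] at this
  rw [Fintype.card_pi, Nat.cast_prod]
  linarith

lemma exists_notMem_Ioo_of_not_unbiased {m : ℕ} {X : Fin m → Type*} [∀ i, Fintype (X i)]
    [∀ i, DecidableEq (X i)] {ε : ℝ} {Y : Finset (∀ i, X i)} {i : Fin m}
    (h : ¬ Unbiased ε (Y : Set (∀ i, X i)) i) :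
    ∃ j, Fintype.card (X i) * marginal Y i j ∉ Set.Ioo (1 + ε)⁻¹ (1 + ε) := by
  contrapose! h
  intro j
  obtain ⟨hlo, hhi⟩ := h j
  have hn : (0 : ℝ) < Fintype.card (X i) := by exact_mod_cast Fintype.card_pos_iff.2 ⟨j⟩
  have hfiber : {y ∈ (Y : Set (∀ i, X i)) | y i = j}.ncard = #{y ∈ Y | y i = j} := by
    rw [← Set.ncard_coe_finset, coe_filter]
    rfl
  rw [hfiber, Set.ncard_coe_finset, Nat.card_eq_fintype_card]
  change _ ≤ marginal Y i j ∧ marginal Y i j ≤ _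
  constructor
  · rw [← div_eq_mul_one_div, one_div, div_le_iff₀' hn]
    exact hlo.le
  · rw [← div_eq_mul_one_div, le_div_iff₀' hn]
    exact hhi.le

lemma log_sub_log_le_of_two_rpow_neg_mul_le {a b t : ℝ} (ha : 0 < a) (h : 2 ^ (-t) * a ≤ b) :
    log a - log b ≤ t * log 2 := by
  have := Real.log_le_log (by positivity) h
  rw [Real.log_mul (by positivity) ha.ne', Real.log_rpow two_pos] at this
  linarith

/-- Pseudo-random behaviour of large sets: for all `ε > 0` and `q` there is `δ > 0` such that
for finite sets `X_1, …, X_m` with `1 ≤ |X_i| ≤ q` and any `Y ⊆ X_1 × … × X_m` with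
`|Y| ≥ 2^{−δm}·|X|`, at most `ε·m` indices fail to be `ε`-unbiased. -/
theorem few_biased_indices (ε : ℝ) (hε : 0 < ε) (q : ℕ) :
    ∃ δ : ℝ, 0 < δ ∧
      ∀ (m : ℕ) (X : Fin m → Type),
        (∀ i, 1 ≤ Nat.card (X i)) → (∀ i, Nat.card (X i) ≤ q) →
        ∀ Y : Set (∀ i, X i),
          (2 : ℝ) ^ (-(δ * (m : ℝ))) * (Nat.card (∀ i, X i) : ℝ) ≤ (Y.ncard : ℝ) →
          ({i : Fin m | ¬ Unbiased ε Y i}.ncard : ℝ) ≤ ε * m := by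
  have hc := biasGap_pos hε
  set c := biasGap ε
  refine ⟨ε * c / ((q + 1) * log 2), by positivity, fun m X hX hq Y hY => ?_⟩
  classical
  rcases m.eq_zero_or_pos with rfl | hm
  · simp [Set.eq_empty_of_isEmpty]
  have : ∀ i, Fintype (X i) := fun i =>
    have := Nat.finite_of_card_ne_zero (Nat.one_le_iff_ne_zero.1 (hX i)); Fintype.ofFinite _
  obtain ⟨Y, rfl⟩ := Y.toFinite.exists_finset_coe
  simp only [Nat.card_eq_fintype_card, Set.ncard_coe_finset] at hX hq hY
  have hXpos : (0 : ℝ) < Fintype.card (∀ i, X i) := by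
    exact_mod_cast Fintype.card_pos_iff.2 ⟨fun i => (Fintype.card_pos_iff.1 (hX i)).some⟩
  have hYne : Y.Nonempty :=
    card_pos.1 (by exact_mod_cast (mul_pos (by positivity) hXpos).trans_le hY)
  have hcount := (card_mul_le_log_card_pi_sub_log_card hYne hε hq
    (B := {i | ¬ Unbiased ε (Y : Set (∀ i, X i)) i})
    fun i hi => exists_notMem_Ioo_of_not_unbiased (mem_filter.1 hi).2).trans
    (log_sub_log_le_of_two_rpow_neg_mul_le hXpos hY)
  rw [Set.ncard_eq_toFinset_card', Set.toFinset_ofPred]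
  have hqpos : (0 : ℝ) < q := by exact_mod_cast (hX ⟨0, hm⟩).trans (hq ⟨0, hm⟩)
  refine le_of_mul_le_mul_right (a := c / (q + 1)) ?_ (by positivity)
  calc _ ≤ _ * (c / q) := by gcongr; linarith
    _ ≤ ε * c / ((q + 1) * log 2) * m * log 2 := hcount
    _ = _ := by field_simp
end
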